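/- arXiv:1905.13619 — 3 statements merged into one kernel-verified Lean document; each statement's English description precedes it below -/
import Mathlib

section
/- Let Ω be a finite set, n ≥ 1, and let σ be a random variable on Ω^n with distribution μ. Let i, i', i_1, i_2, ... be uniformly distributed on [n], mutually independent and independent of σ. Then for any integer T ≥ 0, the sum over θ = 0 to T of the conditional mutual information I(σ_i ; σ_{i'} | i, i', i_1, ..., i_θ, σ_{i_1}, ..., σ_{i_θ}) is at most log |Ω|. -/
open scoped BigOperators
open Finset

/-- A probability distribution on `Fin n → Ω`, given as a mass function. -/
def IsProb {Ω : Type*} [Fintype Ω] {n : ℕ} (μ : (Fin n → Ω) → ℝ) : Prop :=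
  (∀ σ, 0 ≤ μ σ) ∧ ∑ σ, μ σ = 1

/-- The conditional mutual information
`I(σ_i ; σ_{i'} | i, i', i_1, …, i_θ, σ_{i_1}, …, σ_{i_θ})`, where `σ ~ μ` and
`i, i', i_1, …, i_θ` are independent uniform elements of `[n]`.  The indices and
the pinned values are part of the conditioning; we sum the joint probabilities
(which carry the uniform weight `n^{-(θ+2)}`) times the log ratio of conditional
probabilities, with the conventions `0 log 0 = 0` and `0 log (0/0) = 0`. -/
noncomputable def condMI {Ω : Type*} [Fintype Ω] [DecidableEq Ω] (n θ : ℕ)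
    (μ : (Fin n → Ω) → ℝ) : ℝ :=
  (1 / (n : ℝ) ^ (θ + 2)) *
    ∑ i : Fin n, ∑ i' : Fin n, ∑ J : Fin θ → Fin n, ∑ v : Fin θ → Ω, ∑ ω : Ω, ∑ ω' : Ω,
      (let p : ℝ := ∑ σ, if σ i = ω ∧ σ i' = ω' ∧ (∀ k, σ (J k) = v k) then μ σ else 0
       let q : ℝ := ∑ σ, if (∀ k, σ (J k) = v k) then μ σ else 0
       let pX : ℝ := ∑ σ, if σ i = ω ∧ (∀ k, σ (J k) = v k) then μ σ else 0
       let pY : ℝ := ∑ σ, if σ i' = ω' ∧ (∀ k, σ (J k) = v k) then μ σ else 0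
       if p = 0 then 0 else p * Real.log ((p * q) / (pX * pY)))

set_option linter.unusedSectionVars false
set_option maxHeartbeats 1000000

section Aux
variable {Ω : Type*} [Fintype Ω] [DecidableEq Ω] {n : ℕ}

/-- Averaged conditional entropy `H(σ_i | i, i_1..i_θ, σ_{i_1}..σ_{i_θ})`. -/
noncomputable def Hcond (n θ : ℕ) (μ : (Fin n → Ω) → ℝ) : ℝ :=
  (1 / (n : ℝ) ^ (θ + 1)) *
    ∑ i : Fin n, ∑ J : Fin θ → Fin n, ∑ v : Fin θ → Ω, ∑ ω : Ω,
      (∑ σ, if σ i = ω ∧ (∀ k, σ (J k) = v k) then μ σ else 0) *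
        Real.log ((∑ σ, if (∀ k, σ (J k) = v k) then μ σ else 0) /
          (∑ σ, if σ i = ω ∧ (∀ k, σ (J k) = v k) then μ σ else 0))

lemma sum_ite_nonneg (μ : (Fin n → Ω) → ℝ) (hμ : ∀ σ, 0 ≤ μ σ)
    (P : (Fin n → Ω) → Prop) [DecidablePred P] :
    0 ≤ ∑ σ, if P σ then μ σ else 0 :=
  Finset.sum_nonneg fun σ _ => by by_cases h : P σ <;> simp [h, hμ σ]

lemma sum_ite_mono (μ : (Fin n → Ω) → ℝ) (hμ : ∀ σ, 0 ≤ μ σ)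
    {P Q : (Fin n → Ω) → Prop} [DecidablePred P] [DecidablePred Q]
    (h : ∀ σ, P σ → Q σ) :
    (∑ σ, if P σ then μ σ else 0) ≤ ∑ σ, if Q σ then μ σ else 0 := by
  refine Finset.sum_le_sum fun σ _ => ?_
  by_cases hP : P σ
  · simp [hP, h σ hP]
  · by_cases hQ : Q σ <;> simp [hP, hQ, hμ σ]

lemma term_split {p q pX pY : ℝ} (hp : 0 ≤ p) (hpX : p ≤ pX) (hpY : p ≤ pY) (hq : pX ≤ q) :
    (if p = 0 then 0 else p * Real.log ((p * q) / (pX * pY)))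
      = p * Real.log (q / pX) + p * Real.log (p / pY) := by
  rcases eq_or_ne p 0 with h | h
  · simp [h]
  · have hp0 : 0 < p := lt_of_le_of_ne hp (Ne.symm h)
    have hX : 0 < pX := lt_of_lt_of_le hp0 hpX
    have hY : 0 < pY := lt_of_lt_of_le hp0 hpY
    have hq0 : 0 < q := lt_of_lt_of_le hX hq
    rw [if_neg h]
    have hrw : (p * q) / (pX * pY) = (q / pX) * (p / pY) := by field_simp
    rw [hrw, Real.log_mul (div_pos hq0 hX).ne' (div_pos hp0 hY).ne', mul_add]

lemma neg_log_term (p q : ℝ) : p * Real.log (q / p) = -(p * Real.log (p / q)) := by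
  rw [show q / p = (p / q)⁻¹ from (inv_div p q).symm, Real.log_inv, mul_neg]

/-- marginalizing over the value of one coordinate. -/
lemma sum_marg (μ : (Fin n → Ω) → ℝ) (i' : Fin n)
    (R C : (Fin n → Ω) → Prop) [DecidablePred R] [DecidablePred C] :
    ∑ ω' : Ω, (∑ σ, if R σ ∧ σ i' = ω' ∧ C σ then μ σ else 0)
      = ∑ σ, if R σ ∧ C σ then μ σ else 0 := by
  rw [Finset.sum_comm]
  refine Finset.sum_congr rfl fun σ _ => ?_
  by_cases h : R σ ∧ C σ
  · have h2 : ∀ ω' : Ω, (if R σ ∧ σ i' = ω' ∧ C σ then μ σ else 0)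
        = (if σ i' = ω' then μ σ else 0) := fun ω' => by
      by_cases hw : σ i' = ω' <;> simp [hw, h.1, h.2]
    simp only [h2, if_pos h]
    simpa using Finset.sum_ite_eq Finset.univ (σ i') (fun _ => μ σ)
  · have h2 : ∀ ω' : Ω, ¬(R σ ∧ σ i' = ω' ∧ C σ) := fun ω' hc => h ⟨hc.1, hc.2.2⟩
    simp [h2, if_neg h]

/-- reindexing a sum over `Fin (θ+1) → α` as a double sum via `Fin.cons`. -/
lemma sum_cons {α : Type*} [Fintype α] {θ : ℕ} (f : (Fin (θ + 1) → α) → ℝ) :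
    ∑ J : Fin (θ + 1) → α, f J = ∑ x : α, ∑ J : Fin θ → α, f (Fin.cons x J) := by
  rw [← (Fin.consEquiv fun _ => α).sum_comp f, Fintype.sum_prod_type]
  rfl

lemma entropy_le {p : Ω → ℝ} (h0 : ∀ ω, 0 ≤ p ω) (h1 : ∑ ω, p ω = 1) :
    ∑ ω, p ω * Real.log (1 / p ω) ≤ Real.log (Fintype.card Ω) := by
  classical
  set s : Finset Ω := Finset.univ.filter (fun ω => p ω ≠ 0) with hs
  have hsum : ∑ ω ∈ s, p ω = 1 := by
    rw [hs, Finset.sum_filter_ne_zero]; exact h1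
  have hres : ∑ ω, p ω * Real.log (1 / p ω) = ∑ ω ∈ s, p ω * Real.log (1 / p ω) := by
    rw [hs, Finset.sum_filter_of_ne]
    intro ω _ hne hp0
    exact hne (by rw [hp0, zero_mul])
  rw [hres]
  have hposs : ∀ ω ∈ s, 0 < p ω := fun ω hω =>
    lt_of_le_of_ne (h0 ω) (Ne.symm (Finset.mem_filter.mp hω).2)
  have jensen := strictConcaveOn_log_Ioi.concaveOn.le_map_sum
    (t := s) (w := fun ω => p ω) (p := fun ω => 1 / p ω)
    (fun ω _ => h0 ω) hsum
    (fun ω hω => by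
      simp only [Set.mem_Ioi]
      exact one_div_pos.mpr (hposs ω hω))
  simp only [smul_eq_mul] at jensen
  refine le_trans jensen ?_
  have hcards : ∑ ω ∈ s, p ω * (1 / p ω) = (s.card : ℝ) := by
    rw [Finset.sum_congr rfl (fun ω hω => mul_one_div_cancel (hposs ω hω).ne')]
    simp
  rw [hcards]
  have hne : s.Nonempty := Finset.nonempty_of_sum_ne_zero (by rw [hsum]; norm_num)
  have hcard : 0 < s.card := Finset.card_pos.mpr hne
  apply Real.log_le_log (by exact_mod_cast hcard)
  exact_mod_cast Finset.card_le_card (Finset.filter_subset _ _) |>.trans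
    (le_of_eq (Finset.card_univ))

lemma Hcond_nonneg (θ : ℕ) (μ : (Fin n → Ω) → ℝ) (hμ : ∀ σ, 0 ≤ μ σ) :
    0 ≤ Hcond n θ μ := by
  unfold Hcond
  apply mul_nonneg (by positivity)
  refine Finset.sum_nonneg fun i _ => Finset.sum_nonneg fun J _ =>
    Finset.sum_nonneg fun v _ => Finset.sum_nonneg fun ω _ => ?_
  set p := ∑ σ, if σ i = ω ∧ (∀ k, σ (J k) = v k) then μ σ else 0 with hp
  set q := ∑ σ, if (∀ k, σ (J k) = v k) then μ σ else 0 with hq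
  have hp0 : 0 ≤ p := sum_ite_nonneg μ hμ _
  have hpq : p ≤ q := sum_ite_mono μ hμ (fun σ h => h.2)
  rcases eq_or_lt_of_le hp0 with h | h
  · rw [← h, zero_mul]
  · exact mul_nonneg hp0 (Real.log_nonneg ((one_le_div h).mpr hpq))

lemma Hcond_zero_le (μ : (Fin n → Ω) → ℝ) (hn : 1 ≤ n) (hμ : IsProb μ) :
    Hcond n 0 μ ≤ Real.log (Fintype.card Ω) := by
  obtain ⟨hpos, hsum⟩ := hμ
  have hn0 : (n : ℝ) ≠ 0 := by positivity
  unfold Hcond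
  simp only [zero_add, pow_one, Fintype.sum_unique, IsEmpty.forall_iff, and_true, if_true,
    hsum]
  have key : ∀ i : Fin n,
      ∑ ω : Ω, (∑ σ, if σ i = ω then μ σ else 0) *
        Real.log (1 / ∑ σ, if σ i = ω then μ σ else 0) ≤ Real.log (Fintype.card Ω) := by
    intro i
    apply entropy_le (fun ω => sum_ite_nonneg μ hpos _)
    rw [Finset.sum_comm]
    rw [← hsum]
    refine Finset.sum_congr rfl fun σ _ => ?_
    simpa using Finset.sum_ite_eq Finset.univ (σ i) (fun _ => μ σ)
  have hsle : ∑ i : Fin n, ∑ ω : Ω, (∑ σ, if σ i = ω then μ σ else 0) *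
        Real.log (1 / ∑ σ, if σ i = ω then μ σ else 0)
      ≤ (n : ℝ) * Real.log (Fintype.card Ω) := by
    calc _ ≤ ∑ _i : Fin n, Real.log (Fintype.card Ω) :=
          Finset.sum_le_sum fun i _ => key i
      _ = (n : ℝ) * Real.log (Fintype.card Ω) := by
          simp [Finset.sum_const, mul_comm]
  calc 1 / (n:ℝ) * ∑ i : Fin n, ∑ ω : Ω, (∑ σ, if σ i = ω then μ σ else 0) *
        Real.log (1 / ∑ σ, if σ i = ω then μ σ else 0)
      ≤ 1 / (n:ℝ) * ((n : ℝ) * Real.log (Fintype.card Ω)) := by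
        apply mul_le_mul_of_nonneg_left hsle (by positivity)
    _ = Real.log (Fintype.card Ω) := by field_simp

lemma condMI_eq (θ : ℕ) (μ : (Fin n → Ω) → ℝ) (hn : n ≠ 0) (hμ : IsProb μ) :
    condMI n θ μ = Hcond n θ μ - Hcond n (θ + 1) μ := by
  obtain ⟨hpos, hsum⟩ := hμ
  have hn0 : (n : ℝ) ≠ 0 := Nat.cast_ne_zero.mpr hn
  -- the two halves of the split
  set SA : ℝ := ∑ i : Fin n, ∑ i' : Fin n, ∑ J : Fin θ → Fin n, ∑ v : Fin θ → Ω, ∑ ω : Ω, ∑ ω' : Ω,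
      (∑ σ, if σ i = ω ∧ σ i' = ω' ∧ (∀ k, σ (J k) = v k) then μ σ else 0) *
        Real.log ((∑ σ, if (∀ k, σ (J k) = v k) then μ σ else 0) /
          (∑ σ, if σ i = ω ∧ (∀ k, σ (J k) = v k) then μ σ else 0)) with hSA
  set SB : ℝ := ∑ i : Fin n, ∑ i' : Fin n, ∑ J : Fin θ → Fin n, ∑ v : Fin θ → Ω, ∑ ω : Ω, ∑ ω' : Ω,
      (∑ σ, if σ i = ω ∧ σ i' = ω' ∧ (∀ k, σ (J k) = v k) then μ σ else 0) *
        Real.log ((∑ σ, if σ i = ω ∧ σ i' = ω' ∧ (∀ k, σ (J k) = v k) then μ σ else 0) /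
          (∑ σ, if σ i' = ω' ∧ (∀ k, σ (J k) = v k) then μ σ else 0)) with hSB
  have hsplit : condMI n θ μ = (1 / (n : ℝ) ^ (θ + 2)) * SA + (1 / (n : ℝ) ^ (θ + 2)) * SB := by
    rw [hSA, hSB, ← mul_add, ← Finset.sum_add_distrib]
    unfold condMI
    congr 1
    refine Finset.sum_congr rfl fun i _ => ?_
    rw [← Finset.sum_add_distrib]
    refine Finset.sum_congr rfl fun i' _ => ?_
    rw [← Finset.sum_add_distrib]
    refine Finset.sum_congr rfl fun J _ => ?_
    rw [← Finset.sum_add_distrib]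
    refine Finset.sum_congr rfl fun v _ => ?_
    rw [← Finset.sum_add_distrib]
    refine Finset.sum_congr rfl fun ω _ => ?_
    rw [← Finset.sum_add_distrib]
    refine Finset.sum_congr rfl fun ω' _ => ?_
    exact term_split (sum_ite_nonneg μ hpos _)
      (sum_ite_mono μ hpos fun σ h => ⟨h.1, h.2.2⟩)
      (sum_ite_mono μ hpos fun σ h => ⟨h.2.1, h.2.2⟩)
      (sum_ite_mono μ hpos fun σ h => h.2)
  have hA : (1 / (n : ℝ) ^ (θ + 2)) * SA = Hcond n θ μ := by
    rw [hSA]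
    have inner1 : ∀ (i i' : Fin n) (J : Fin θ → Fin n) (v : Fin θ → Ω) (ω : Ω),
        (∑ ω' : Ω, (∑ σ, if σ i = ω ∧ σ i' = ω' ∧ (∀ k, σ (J k) = v k) then μ σ else 0) *
          Real.log ((∑ σ, if (∀ k, σ (J k) = v k) then μ σ else 0) /
            (∑ σ, if σ i = ω ∧ (∀ k, σ (J k) = v k) then μ σ else 0)))
        = (∑ σ, if σ i = ω ∧ (∀ k, σ (J k) = v k) then μ σ else 0) *
          Real.log ((∑ σ, if (∀ k, σ (J k) = v k) then μ σ else 0) /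
            (∑ σ, if σ i = ω ∧ (∀ k, σ (J k) = v k) then μ σ else 0)) := by
      intro i i' J v ω
      rw [← Finset.sum_mul, sum_marg μ i' (fun σ => σ i = ω) (fun σ => ∀ k, σ (J k) = v k)]
    simp only [inner1]
    have inner2 : ∀ i : Fin n,
        (∑ i' : Fin n, ∑ J : Fin θ → Fin n, ∑ v : Fin θ → Ω, ∑ ω : Ω,
          (∑ σ, if σ i = ω ∧ (∀ k, σ (J k) = v k) then μ σ else 0) *
            Real.log ((∑ σ, if (∀ k, σ (J k) = v k) then μ σ else 0) /
              (∑ σ, if σ i = ω ∧ (∀ k, σ (J k) = v k) then μ σ else 0)))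
        = (n : ℝ) * ∑ J : Fin θ → Fin n, ∑ v : Fin θ → Ω, ∑ ω : Ω,
          (∑ σ, if σ i = ω ∧ (∀ k, σ (J k) = v k) then μ σ else 0) *
            Real.log ((∑ σ, if (∀ k, σ (J k) = v k) then μ σ else 0) /
              (∑ σ, if σ i = ω ∧ (∀ k, σ (J k) = v k) then μ σ else 0)) := by
      intro i
      rw [Finset.sum_const, Finset.card_univ, Fintype.card_fin, nsmul_eq_mul]
    simp only [inner2]
    rw [← Finset.mul_sum]
    unfold Hcond
    rw [← mul_assoc]
    congr 1
    rw [pow_succ]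
    field_simp
  have hB : (1 / (n : ℝ) ^ (θ + 2)) * SB = - Hcond n (θ + 1) μ := by
    have hBsum : (∑ i : Fin n, ∑ J : Fin (θ + 1) → Fin n, ∑ v : Fin (θ + 1) → Ω, ∑ ω : Ω,
        (∑ σ, if σ i = ω ∧ (∀ k, σ (J k) = v k) then μ σ else 0) *
          Real.log ((∑ σ, if (∀ k, σ (J k) = v k) then μ σ else 0) /
            (∑ σ, if σ i = ω ∧ (∀ k, σ (J k) = v k) then μ σ else 0)))
        = - SB := by
      rw [hSB, ← Finset.sum_neg_distrib]
      refine Finset.sum_congr rfl fun i _ => ?_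
      rw [_root_.sum_cons, ← Finset.sum_neg_distrib]
      refine Finset.sum_congr rfl fun i' _ => ?_
      rw [← Finset.sum_neg_distrib]
      refine Finset.sum_congr rfl fun J _ => ?_
      rw [_root_.sum_cons, Finset.sum_comm, ← Finset.sum_neg_distrib]
      refine Finset.sum_congr rfl fun v _ => ?_
      rw [Finset.sum_comm, ← Finset.sum_neg_distrib]
      refine Finset.sum_congr rfl fun ω _ => ?_
      rw [← Finset.sum_neg_distrib]
      refine Finset.sum_congr rfl fun ω' _ => ?_
      simp only [Fin.forall_fin_succ, Fin.cons_zero, Fin.cons_succ]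
      exact neg_log_term _ _
    unfold Hcond
    rw [hBsum]
    have hpow : (n : ℝ) ^ (θ + 1 + 1) = (n : ℝ) ^ (θ + 2) := by norm_num
    rw [hpow]
    ring
  rw [hsplit, hA, hB]
  ring

end Aux


/-- Lemma (Lemma 4.4 / mutual information telescoping bound):
for `σ ~ μ` on `Ω^n` and independent uniform indices,
`∑_{θ=0}^{T} I(σ_i ; σ_{i'} | i, i', i_1, …, i_θ, σ_{i_1}, …, σ_{i_θ}) ≤ log |Ω|`. -/
theorem sum_condMI_le_log_card {Ω : Type*} [Fintype Ω] [DecidableEq Ω]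
    (n : ℕ) (hn : 1 ≤ n) (μ : (Fin n → Ω) → ℝ) (hμ : IsProb μ) (T : ℕ) :
    ∑ θ ∈ Finset.range (T + 1), condMI n θ μ ≤ Real.log (Fintype.card Ω) := by
  have hn' : n ≠ 0 := Nat.one_le_iff_ne_zero.mp hn
  have key : ∑ θ ∈ Finset.range (T + 1), condMI n θ μ
      = Hcond n 0 μ - Hcond n (T + 1) μ := by
    rw [Finset.sum_congr rfl fun θ _ => condMI_eq θ μ hn' hμ]
    exact Finset.sum_range_sub' (fun θ => Hcond n θ μ) (T + 1)
  rw [key]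
  have h1 := Hcond_nonneg (n := n) (Ω := Ω) (T + 1) μ hμ.1
  have h2 := Hcond_zero_le μ hn hμ
  linarith
end

section
/- Let Ω be a finite set, n ≥ 1, μ a probability distribution on Ω^n, and T ≥ 1 an integer. Draw 0 ≤ Θ ≤ T uniformly, draw a uniformly random set I ⊆ [n] of size Θ, draw σ̂ from μ independently, and let μ̂ = μ[· | {σ : ∀ i ∈ I, σ_i = σ̂_i}] be the conditional distribution. Let i, i' be independent uniform elements of [n]. Then E[ D_KL( μ̂_{i,i'} ‖ μ̂_i ⊗ μ̂_{i'} ) ] ≤ (log |Ω|)/T, where the expectation is over Θ, I, σ̂, i, i'. -/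
open scoped BigOperators
open Finset

/-- Single-coordinate marginal. -/
noncomputable def marg {Ω : Type*} [Fintype Ω] [DecidableEq Ω] {n : ℕ}
    (μ : (Fin n → Ω) → ℝ) (i : Fin n) (ω : Ω) : ℝ :=
  ∑ σ, if σ i = ω then μ σ else 0

/-- Two-coordinate joint marginal. -/
noncomputable def marg2 {Ω : Type*} [Fintype Ω] [DecidableEq Ω] {n : ℕ}
    (μ : (Fin n → Ω) → ℝ) (i j : Fin n) (ω ω' : Ω) : ℝ :=
  ∑ σ, if σ i = ω ∧ σ j = ω' then μ σ else 0

/-- Kullback-Leibler divergence of two mass functions on `Ω × Ω`,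
with the convention `0 log(0/q) = 0`. -/
noncomputable def KL2 {Ω : Type*} [Fintype Ω] (p q : Ω → Ω → ℝ) : ℝ :=
  ∑ ω, ∑ ω', if p ω ω' = 0 then 0 else p ω ω' * Real.log (p ω ω' / q ω ω')

/-- Normalising constant of the pinning operation: `μ{σ : ∀ i ∈ I, σ_i = τ_i}`. -/
noncomputable def pinZ {Ω : Type*} [Fintype Ω] [DecidableEq Ω] {n : ℕ}
    (μ : (Fin n → Ω) → ℝ) (I : Finset (Fin n)) (τ : Fin n → Ω) : ℝ :=
  ∑ σ, if (∀ i ∈ I, σ i = τ i) then μ σ else 0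

/-- The pinned (conditional) distribution `μ[· | σ_i = τ_i ∀ i ∈ I]`. -/
noncomputable def pinned {Ω : Type*} [Fintype Ω] [DecidableEq Ω] {n : ℕ}
    (μ : (Fin n → Ω) → ℝ) (I : Finset (Fin n)) (τ : Fin n → Ω) : (Fin n → Ω) → ℝ :=
  fun σ => if (∀ i ∈ I, σ i = τ i) then μ σ / pinZ μ I τ else 0

section Ent
variable {Ω : Type*} [Fintype Ω] [DecidableEq Ω] {n : ℕ}

lemma negMulLog_le_aux {x c : ℝ} (hx : 0 ≤ x) (hc : 0 < c) :
    Real.negMulLog x ≤ x * Real.log c + (1 / c - x) := by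
  rcases eq_or_lt_of_le hx with h | h
  · rw [← h, Real.negMulLog_zero]
    have : 0 ≤ 1 / c := by positivity
    simpa using this
  · have hcx : 0 < 1 / (c * x) := by positivity
    have hlog := Real.log_le_sub_one_of_pos hcx
    have e : Real.log (1 / (c * x)) = -(Real.log c + Real.log x) := by
      rw [one_div, Real.log_inv, Real.log_mul (ne_of_gt hc) (ne_of_gt h)]
    rw [e] at hlog
    have h2 := mul_le_mul_of_nonneg_left hlog (le_of_lt h)
    have e2 : x * (1 / (c * x) - 1) = 1 / c - x := by field_simp
    rw [e2] at h2
    have e3 : x * -(Real.log c + Real.log x) = Real.negMulLog x - x * Real.log c := by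
      rw [Real.negMulLog]; ring
    rw [e3] at h2
    linarith

lemma gibbs {α : Type*} [Fintype α] (p q : α → ℝ) (hp : ∀ a, 0 ≤ p a) (hq : ∀ a, 0 ≤ q a)
    (hsupp : ∀ a, q a = 0 → p a = 0) (hs : ∑ a, q a ≤ ∑ a, p a) :
    0 ≤ ∑ a, (if p a = 0 then 0 else p a * Real.log (p a / q a)) := by
  have key : ∀ a, p a - q a ≤ (if p a = 0 then 0 else p a * Real.log (p a / q a)) := by
    intro a
    by_cases h : p a = 0
    · simp [h, hq a]
    · have hp' : 0 < p a := lt_of_le_of_ne (hp a) (Ne.symm h)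
      have hq' : 0 < q a := by
        rcases eq_or_lt_of_le (hq a) with hh | hh
        · exact absurd (hsupp a hh.symm) h
        · exact hh
      rw [if_neg h]
      have hlog := Real.log_le_sub_one_of_pos (div_pos hq' hp')
      have h2 := mul_le_mul_of_nonneg_left hlog (le_of_lt hp')
      have e2 : p a * (q a / p a - 1) = q a - p a := by field_simp
      rw [e2, Real.log_div (ne_of_gt hq') (ne_of_gt hp')] at h2
      rw [Real.log_div (ne_of_gt hp') (ne_of_gt hq')]
      nlinarith
  calc (0:ℝ) ≤ ∑ a, (p a - q a) := by rw [Finset.sum_sub_distrib]; linarith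
    _ ≤ _ := Finset.sum_le_sum fun a _ => key a
end Ent
namespace PinProof

variable {Ω : Type*} [Fintype Ω] [DecidableEq Ω] {n : ℕ}

lemma marg_nonneg {ν : (Fin n → Ω) → ℝ} (hν : ∀ σ, 0 ≤ ν σ) (i : Fin n) (ω : Ω) :
    0 ≤ marg ν i ω :=
  Finset.sum_nonneg fun σ _ => by split <;> simp [hν σ]

lemma marg2_nonneg {ν : (Fin n → Ω) → ℝ} (hν : ∀ σ, 0 ≤ ν σ) (i i' : Fin n) (ω ω' : Ω) :
    0 ≤ marg2 ν i i' ω ω' :=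
  Finset.sum_nonneg fun σ _ => by split <;> simp [hν σ]

lemma sum_marg (ν : (Fin n → Ω) → ℝ) (i : Fin n) : ∑ ω, marg ν i ω = ∑ σ, ν σ := by
  unfold marg
  rw [Finset.sum_comm]
  exact Finset.sum_congr rfl fun σ _ => by simp

lemma sum_marg2_right (ν : (Fin n → Ω) → ℝ) (i i' : Fin n) (ω : Ω) :
    ∑ ω', marg2 ν i i' ω ω' = marg ν i ω := by
  unfold marg2 marg
  rw [Finset.sum_comm]
  refine Finset.sum_congr rfl fun σ _ => ?_
  by_cases h : σ i = ω <;> simp [h]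

lemma sum_marg2_left (ν : (Fin n → Ω) → ℝ) (i i' : Fin n) (ω' : Ω) :
    ∑ ω, marg2 ν i i' ω ω' = marg ν i' ω' := by
  unfold marg2 marg
  rw [Finset.sum_comm]
  refine Finset.sum_congr rfl fun σ _ => ?_
  by_cases h : σ i' = ω' <;> simp [h]

lemma marg2_le_left {ν : (Fin n → Ω) → ℝ} (hν : ∀ σ, 0 ≤ ν σ) (i i' : Fin n) (ω ω' : Ω) :
    marg2 ν i i' ω ω' ≤ marg ν i ω := by
  rw [← sum_marg2_right ν i i' ω]
  exact Finset.single_le_sum (fun x _ => marg2_nonneg hν i i' ω x) (Finset.mem_univ ω')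

lemma marg2_le_right {ν : (Fin n → Ω) → ℝ} (hν : ∀ σ, 0 ≤ ν σ) (i i' : Fin n) (ω ω' : Ω) :
    marg2 ν i i' ω ω' ≤ marg ν i' ω' := by
  rw [← sum_marg2_left ν i i' ω']
  exact Finset.single_le_sum (fun x _ => marg2_nonneg hν i i' x ω') (Finset.mem_univ ω)

lemma marg_le_sum {ν : (Fin n → Ω) → ℝ} (hν : ∀ σ, 0 ≤ ν σ) (i : Fin n) (ω : Ω) :
    marg ν i ω ≤ ∑ σ, ν σ := by
  rw [← sum_marg ν i]
  exact Finset.single_le_sum (fun x _ => marg_nonneg hν i x) (Finset.mem_univ ω)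

lemma pinZ_nonneg {μ : (Fin n → Ω) → ℝ} (hμ : ∀ σ, 0 ≤ μ σ) (I : Finset (Fin n))
    (τ : Fin n → Ω) : 0 ≤ pinZ μ I τ :=
  Finset.sum_nonneg fun σ _ => by split <;> simp [hμ σ]

lemma self_le_pinZ {μ : (Fin n → Ω) → ℝ} (hμ : ∀ σ, 0 ≤ μ σ) (I : Finset (Fin n))
    (τ : Fin n → Ω) : μ τ ≤ pinZ μ I τ := by
  have : μ τ = if (∀ i ∈ I, τ i = τ i) then μ τ else 0 := by simp
  rw [this]
  exact Finset.single_le_sum (f := fun σ => if (∀ i ∈ I, σ i = τ i) then μ σ else 0)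
    (fun σ _ => by split <;> simp [hμ σ]) (Finset.mem_univ τ)

lemma pinned_nonneg {μ : (Fin n → Ω) → ℝ} (hμ : ∀ σ, 0 ≤ μ σ) (I : Finset (Fin n))
    (τ σ : Fin n → Ω) : 0 ≤ pinned μ I τ σ := by
  unfold pinned
  split
  · exact div_nonneg (hμ σ) (pinZ_nonneg hμ I τ)
  · exact le_refl _

lemma sum_pinned {μ : (Fin n → Ω) → ℝ} {I : Finset (Fin n)} {τ : Fin n → Ω}
    (h : pinZ μ I τ ≠ 0) : ∑ σ, pinned μ I τ σ = 1 := by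
  have e : ∀ σ, pinned μ I τ σ
      = (if (∀ i ∈ I, σ i = τ i) then μ σ else 0) / pinZ μ I τ := by
    intro σ; unfold pinned; split <;> simp
  simp_rw [e, ← Finset.sum_div]
  rw [show (∑ σ, if (∀ i ∈ I, σ i = τ i) then μ σ else 0) = pinZ μ I τ from rfl, div_self h]

lemma pinZ_congr (μ : (Fin n → Ω) → ℝ) {I : Finset (Fin n)} {a b : Fin n → Ω}
    (h : ∀ j ∈ I, a j = b j) : pinZ μ I a = pinZ μ I b := by
  unfold pinZ
  refine Finset.sum_congr rfl fun σ _ => ?_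
  refine if_congr ⟨fun hh j hj => ?_, fun hh j hj => ?_⟩ rfl rfl
  · rw [← h j hj]; exact hh j hj
  · rw [h j hj]; exact hh j hj

lemma pinned_congr (μ : (Fin n → Ω) → ℝ) {I : Finset (Fin n)} {a b : Fin n → Ω}
    (h : ∀ j ∈ I, a j = b j) : pinned μ I a = pinned μ I b := by
  funext σ
  unfold pinned
  rw [pinZ_congr μ h]
  refine if_congr ⟨fun hh j hj => ?_, fun hh j hj => ?_⟩ rfl rfl
  · rw [← h j hj]; exact hh j hj
  · rw [h j hj]; exact hh j hj

end PinProof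
namespace PinProof
variable {Ω : Type*} [Fintype Ω] [DecidableEq Ω] {n : ℕ}

noncomputable def H1 (ν : (Fin n → Ω) → ℝ) (i : Fin n) : ℝ :=
  ∑ ω, Real.negMulLog (marg ν i ω)

noncomputable def H2 (ν : (Fin n → Ω) → ℝ) (i i' : Fin n) : ℝ :=
  ∑ ω, ∑ ω', Real.negMulLog (marg2 ν i i' ω ω')

noncomputable def condH (μ : (Fin n → Ω) → ℝ) (I : Finset (Fin n)) (i : Fin n) : ℝ :=
  ∑ τ, μ τ * H1 (pinned μ I τ) i

lemma H1_nonneg {ν : (Fin n → Ω) → ℝ} (hν : ∀ σ, 0 ≤ ν σ) (hs : ∑ σ, ν σ = 1) (i : Fin n) :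
    0 ≤ H1 ν i :=
  Finset.sum_nonneg fun ω _ =>
    Real.negMulLog_nonneg (marg_nonneg hν i ω) (by rw [← hs]; exact marg_le_sum hν i ω)

lemma H1_le_log {ν : (Fin n → Ω) → ℝ} (hν : ∀ σ, 0 ≤ ν σ) (hs : ∑ σ, ν σ = 1) (i : Fin n) :
    H1 ν i ≤ Real.log (Fintype.card Ω) := by
  have hne : Nonempty Ω := by
    rcases isEmpty_or_nonempty Ω with h | h
    · exfalso
      have h0 : ∑ ω : Ω, marg ν i ω = 0 := by simp [Finset.univ_eq_empty]
      rw [sum_marg, hs] at h0; norm_num at h0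
    · exact h
  have hcard : 0 < (Fintype.card Ω : ℝ) := by
    have := Fintype.card_pos_iff.mpr hne; exact_mod_cast this
  have key : ∀ ω : Ω, Real.negMulLog (marg ν i ω)
      ≤ marg ν i ω * Real.log (Fintype.card Ω) + (1 / (Fintype.card Ω : ℝ) - marg ν i ω) :=
    fun ω => negMulLog_le_aux (marg_nonneg hν i ω) hcard
  calc H1 ν i ≤ ∑ ω, (marg ν i ω * Real.log (Fintype.card Ω)
        + (1 / (Fintype.card Ω : ℝ) - marg ν i ω)) := Finset.sum_le_sum fun ω _ => key ω
    _ = Real.log (Fintype.card Ω) := by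
        rw [Finset.sum_add_distrib, Finset.sum_sub_distrib, ← Finset.sum_mul, sum_marg, hs,
          Finset.sum_const, Finset.card_univ]
        field_simp
        rw [nsmul_eq_mul, mul_one_div_cancel (ne_of_gt hcard)]; ring

lemma KL2_eq {ν : (Fin n → Ω) → ℝ} (hν : ∀ σ, 0 ≤ ν σ) (i i' : Fin n) :
    KL2 (marg2 ν i i') (fun ω ω' => marg ν i ω * marg ν i' ω') =
      H1 ν i + H1 ν i' - H2 ν i i' := by
  unfold KL2
  have key : ∀ ω ω', (if marg2 ν i i' ω ω' = 0 then 0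
        else marg2 ν i i' ω ω' * Real.log (marg2 ν i i' ω ω' / (marg ν i ω * marg ν i' ω')))
      = (- Real.negMulLog (marg2 ν i i' ω ω'))
        - marg2 ν i i' ω ω' * Real.log (marg ν i ω)
        - marg2 ν i i' ω ω' * Real.log (marg ν i' ω') := by
    intro ω ω'
    by_cases h : marg2 ν i i' ω ω' = 0
    · rw [if_pos h, h, Real.negMulLog_zero]; ring
    · have hp : 0 < marg2 ν i i' ω ω' := lt_of_le_of_ne (marg2_nonneg hν i i' ω ω') (Ne.symm h)
      have hq : 0 < marg ν i ω := lt_of_lt_of_le hp (marg2_le_left hν i i' ω ω')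
      have hr : 0 < marg ν i' ω' := lt_of_lt_of_le hp (marg2_le_right hν i i' ω ω')
      rw [if_neg h, Real.log_div h (by positivity),
        Real.log_mul (ne_of_gt hq) (ne_of_gt hr), Real.negMulLog]
      ring
  simp_rw [key, Finset.sum_sub_distrib]
  have e1 : ∀ ω, ∑ ω', marg2 ν i i' ω ω' * Real.log (marg ν i ω)
      = marg ν i ω * Real.log (marg ν i ω) := by
    intro ω; rw [← Finset.sum_mul, sum_marg2_right]
  have e2 : ∑ ω, ∑ ω', marg2 ν i i' ω ω' * Real.log (marg ν i' ω')
      = ∑ ω', marg ν i' ω' * Real.log (marg ν i' ω') := by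
    rw [Finset.sum_comm]
    refine Finset.sum_congr rfl fun ω' _ => ?_
    rw [← Finset.sum_mul, sum_marg2_left]
  simp_rw [e1]
  rw [e2]
  unfold H1 H2
  simp only [Real.negMulLog, Finset.sum_sub_distrib, Finset.sum_neg_distrib, neg_mul]
  ring

lemma KL2_nonneg {ν : (Fin n → Ω) → ℝ} (hν : ∀ σ, 0 ≤ ν σ) (hs : ∑ σ, ν σ = 1) (i i' : Fin n) :
    0 ≤ KL2 (marg2 ν i i') (fun ω ω' => marg ν i ω * marg ν i' ω') := by
  have h := gibbs (α := Ω × Ω) (fun a => marg2 ν i i' a.1 a.2)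
    (fun a => marg ν i a.1 * marg ν i' a.2)
    (fun a => marg2_nonneg hν i i' a.1 a.2)
    (fun a => mul_nonneg (marg_nonneg hν i a.1) (marg_nonneg hν i' a.2))
    (fun a ha => by
      rcases mul_eq_zero.mp ha with h0 | h0
      · exact le_antisymm (h0 ▸ marg2_le_left hν i i' a.1 a.2) (marg2_nonneg hν i i' a.1 a.2)
      · exact le_antisymm (h0 ▸ marg2_le_right hν i i' a.1 a.2) (marg2_nonneg hν i i' a.1 a.2))
    (le_of_eq (by
      rw [Fintype.sum_prod_type, Fintype.sum_prod_type, ← Finset.sum_mul_sum]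
      simp_rw [sum_marg2_right]
      simp [sum_marg, hs]))
  rw [Fintype.sum_prod_type] at h
  exact h

end PinProof
namespace PinProof
variable {Ω : Type*} [Fintype Ω] [DecidableEq Ω] {n : ℕ}

lemma marg_of_support {ν : (Fin n → Ω) → ℝ} (hs : ∑ σ, ν σ = 1) {i' : Fin n} {v : Ω}
    (hsupp : ∀ σ, ν σ ≠ 0 → σ i' = v) (ω' : Ω) :
    marg ν i' ω' = if ω' = v then 1 else 0 := by
  by_cases h : ω' = v
  · subst h
    rw [if_pos rfl, ← hs]
    unfold marg
    refine Finset.sum_congr rfl fun σ _ => ?_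
    by_cases hσ : ν σ = 0
    · simp [hσ]
    · rw [if_pos (hsupp σ hσ)]
  · rw [if_neg h]
    unfold marg
    refine Finset.sum_eq_zero fun σ _ => ?_
    by_cases hσ : ν σ = 0
    · simp [hσ]
    · exact if_neg fun c => h (((hsupp σ hσ).symm.trans c).symm)

lemma marg2_of_support {ν : (Fin n → Ω) → ℝ} {i i' : Fin n} {v : Ω}
    (hsupp : ∀ σ, ν σ ≠ 0 → σ i' = v) (ω ω' : Ω) :
    marg2 ν i i' ω ω' = if ω' = v then marg ν i ω else 0 := by
  by_cases h : ω' = v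
  · subst h
    rw [if_pos rfl]
    unfold marg2 marg
    refine Finset.sum_congr rfl fun σ _ => ?_
    by_cases hσ : ν σ = 0
    · simp [hσ]
    · simp [hsupp σ hσ]
  · rw [if_neg h]
    unfold marg2
    refine Finset.sum_eq_zero fun σ _ => ?_
    by_cases hσ : ν σ = 0
    · simp [hσ]
    · exact if_neg fun c => h (((hsupp σ hσ).symm.trans c.2).symm)

lemma pinZ_ne_zero {μ : (Fin n → Ω) → ℝ} (hμ0 : ∀ σ, 0 ≤ μ σ) {I : Finset (Fin n)}
    {τ : Fin n → Ω} (hτ : μ τ ≠ 0) : pinZ μ I τ ≠ 0 := by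
  intro e
  have h1 := self_le_pinZ hμ0 I τ
  rw [e] at h1
  exact hτ (le_antisymm h1 (hμ0 τ))

lemma pinned_support {μ : (Fin n → Ω) → ℝ} {I : Finset (Fin n)} {τ σ : Fin n → Ω}
    (h : pinned μ I τ σ ≠ 0) : ∀ j ∈ I, σ j = τ j := by
  by_contra hc
  exact h (by simp only [pinned, if_neg hc])

lemma chain_mem_pt {μ : (Fin n → Ω) → ℝ} (hμ0 : ∀ σ, 0 ≤ μ σ) {I : Finset (Fin n)}
    {i' : Fin n} (hI : i' ∈ I) {τ : Fin n → Ω} (hτ : μ τ ≠ 0) (i : Fin n) :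
    H2 (pinned μ I τ) i i' - H1 (pinned μ I τ) i' = H1 (pinned μ I τ) i := by
  have hZ : pinZ μ I τ ≠ 0 := pinZ_ne_zero hμ0 hτ
  have hs : ∑ σ, pinned μ I τ σ = 1 := sum_pinned hZ
  have hsupp : ∀ σ, pinned μ I τ σ ≠ 0 → σ i' = τ i' :=
    fun σ hσ => pinned_support hσ i' hI
  have e1 : ∀ ω', marg (pinned μ I τ) i' ω' = if ω' = τ i' then 1 else 0 :=
    marg_of_support hs hsupp
  have e2 : ∀ ω ω', marg2 (pinned μ I τ) i i' ω ω'
      = if ω' = τ i' then marg (pinned μ I τ) i ω else 0 :=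
    marg2_of_support hsupp
  unfold H1 H2
  simp_rw [e1, e2, apply_ite Real.negMulLog, Real.negMulLog_zero]
  simp [Finset.sum_ite_eq', Real.negMulLog, Real.log_one]

lemma chainA {μ : (Fin n → Ω) → ℝ} (hμ0 : ∀ σ, 0 ≤ μ σ) {I : Finset (Fin n)} {i' : Fin n}
    (hi' : i' ∉ I) {τ : Fin n → Ω} (hτ : μ τ ≠ 0) (i : Fin n) :
    H2 (pinned μ I τ) i i' - H1 (pinned μ I τ) i'
      = ∑ ω', marg (pinned μ I τ) i' ω'
          * H1 (pinned μ (insert i' I) (Function.update τ i' ω')) i := by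
  have hZ : pinZ μ I τ ≠ 0 := pinZ_ne_zero hμ0 hτ
  unfold H1 H2
  rw [Finset.sum_comm, ← Finset.sum_sub_distrib]
  refine Finset.sum_congr rfl fun ω' _ => ?_
  by_cases hQ : marg (pinned μ I τ) i' ω' = 0
  · have hz : ∀ ω, marg2 (pinned μ I τ) i i' ω ω' = 0 := fun ω =>
      le_antisymm (hQ ▸ marg2_le_right (pinned_nonneg hμ0 I τ) i i' ω ω')
        (marg2_nonneg (pinned_nonneg hμ0 I τ) i i' ω ω')
    simp [hz, hQ, Real.negMulLog_zero]
  · have hcond : ∀ σ : Fin n → Ω, (∀ j ∈ insert i' I, σ j = Function.update τ i' ω' j)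
        ↔ (σ i' = ω' ∧ ∀ j ∈ I, σ j = τ j) := by
      intro σ
      rw [Finset.forall_mem_insert]
      constructor
      · rintro ⟨h1, h2⟩
        refine ⟨by simpa using h1, fun j hj => ?_⟩
        have h3 := h2 j hj
        rwa [Function.update_of_ne (fun e => hi' (by rwa [e] at hj)) ω' τ] at h3
      · rintro ⟨h1, h2⟩
        refine ⟨by simpa using h1, fun j hj => ?_⟩
        rw [Function.update_of_ne (fun e => hi' (by rwa [e] at hj)) ω' τ]
        exact h2 j hj
    have hcondI : ∀ σ : Fin n → Ω,
        (∀ j ∈ I, σ j = Function.update τ i' ω' j) ↔ (∀ j ∈ I, σ j = τ j) := by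
      intro σ
      refine forall₂_congr fun j hj => ?_
      rw [Function.update_of_ne (fun e => hi' (by rwa [e] at hj)) ω' τ]
    have hQZ : marg (pinned μ I τ) i' ω'
        = pinZ μ (insert i' I) (Function.update τ i' ω') / pinZ μ I τ := by
      unfold marg pinned
      rw [eq_div_iff hZ, Finset.sum_mul]
      conv_rhs => rw [pinZ]
      refine Finset.sum_congr rfl fun σ _ => ?_
      by_cases h1 : σ i' = ω' <;> by_cases h2 : ∀ j ∈ I, σ j = τ j <;>
        simp [h1, h2, hcond σ, hcondI σ, div_mul_cancel₀, hZ]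
    have hZJ : pinZ μ (insert i' I) (Function.update τ i' ω') ≠ 0 := by
      intro e
      rw [hQZ, e, zero_div] at hQ
      exact hQ rfl
    have ha : ∀ ω, marg2 (pinned μ I τ) i i' ω ω'
        = (∑ σ, if ((∀ j ∈ insert i' I, σ j = Function.update τ i' ω' j) ∧ σ i = ω)
            then μ σ else 0) / pinZ μ I τ := by
      intro ω
      unfold marg2 pinned
      rw [eq_div_iff hZ, Finset.sum_mul]
      refine Finset.sum_congr rfl fun σ _ => ?_
      by_cases h1 : σ i = ω <;> by_cases h2 : σ i' = ω' <;> by_cases h3 : ∀ j ∈ I, σ j = τ j <;>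
        simp [h1, h2, h3, hcond σ, hcondI σ, div_mul_cancel₀, hZ]
    have hb : ∀ ω, marg (pinned μ (insert i' I) (Function.update τ i' ω')) i ω
        = (∑ σ, if ((∀ j ∈ insert i' I, σ j = Function.update τ i' ω' j) ∧ σ i = ω)
            then μ σ else 0) / pinZ μ (insert i' I) (Function.update τ i' ω') := by
      intro ω
      unfold marg pinned
      rw [eq_div_iff hZJ, Finset.sum_mul]
      refine Finset.sum_congr rfl fun σ _ => ?_
      by_cases h1 : σ i = ω <;> by_cases h2 : ∀ j ∈ insert i' I, σ j = Function.update τ i' ω' j <;>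
        simp [h1, h2, div_mul_cancel₀, hZJ, and_comm]
    have hkey : ∀ ω, marg2 (pinned μ I τ) i i' ω ω'
        = marg (pinned μ I τ) i' ω'
          * marg (pinned μ (insert i' I) (Function.update τ i' ω')) i ω := by
      intro ω
      rw [ha ω, hb ω, hQZ]
      field_simp
    have hpsum : ∑ ω, marg (pinned μ (insert i' I) (Function.update τ i' ω')) i ω = 1 := by
      rw [sum_marg, sum_pinned hZJ]
    simp_rw [hkey, Real.negMulLog_mul]
    rw [Finset.sum_add_distrib, ← Finset.sum_mul, hpsum, ← Finset.mul_sum]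
    ring

end PinProof
namespace PinProof
variable {Ω : Type*} [Fintype Ω] [DecidableEq Ω] {n : ℕ}

lemma chainB {μ : (Fin n → Ω) → ℝ} (hμ0 : ∀ σ, 0 ≤ μ σ) {I : Finset (Fin n)} {i' : Fin n}
    (hi' : i' ∉ I) (i : Fin n) :
    ∑ τ, μ τ * ∑ ω', marg (pinned μ I τ) i' ω'
        * H1 (pinned μ (insert i' I) (Function.update τ i' ω')) i
      = condH μ (insert i' I) i := by
  unfold condH
  have step1 : ∀ τ : Fin n → Ω, μ τ * ∑ ω', marg (pinned μ I τ) i' ω'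
        * H1 (pinned μ (insert i' I) (Function.update τ i' ω')) i
      = ∑ σ, μ τ * (pinned μ I τ σ
          * H1 (pinned μ (insert i' I) (Function.update τ i' (σ i'))) i) := by
    intro τ
    rw [Finset.mul_sum]
    unfold marg
    simp_rw [Finset.sum_mul, Finset.mul_sum]
    rw [Finset.sum_comm]
    refine Finset.sum_congr rfl fun σ _ => ?_
    refine (Finset.sum_eq_single (σ i') (fun b _ hb => by
        rw [if_neg fun e => hb e.symm]; ring)
      (fun h => absurd (Finset.mem_univ _) h)).trans ?_
    rw [if_pos rfl]
  simp_rw [step1]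
  rw [Finset.sum_comm]
  refine Finset.sum_congr rfl fun σ _ => ?_
  have e2 : ∀ τ : Fin n → Ω, μ τ * (pinned μ I τ σ
        * H1 (pinned μ (insert i' I) (Function.update τ i' (σ i'))) i)
      = (if ∀ j ∈ I, σ j = τ j then μ τ else 0)
        * ((μ σ / pinZ μ I σ) * H1 (pinned μ (insert i' I) σ) i) := by
    intro τ
    by_cases hC : ∀ j ∈ I, σ j = τ j
    · have hZeq : pinZ μ I τ = pinZ μ I σ := pinZ_congr μ fun j hj => (hC j hj).symm
      have hG : pinned μ (insert i' I) (Function.update τ i' (σ i'))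
          = pinned μ (insert i' I) σ := by
        refine pinned_congr μ fun j hj => ?_
        rcases Finset.mem_insert.mp hj with e | hjI
        · subst e; simp
        · rw [Function.update_of_ne (fun e => hi' (by rwa [e] at hjI)) _ τ]
          exact (hC j hjI).symm
      rw [if_pos hC, hG]
      have hps : pinned μ I τ σ = μ σ / pinZ μ I σ := by
        simp only [pinned, if_pos hC, hZeq]
      rw [hps]
    · rw [if_neg hC]
      have hps : pinned μ I τ σ = 0 := by simp only [pinned, if_neg hC]
      rw [hps]
      ring
  simp_rw [e2]
  rw [← Finset.sum_mul]
  have e3 : (∑ τ : Fin n → Ω, if ∀ j ∈ I, σ j = τ j then μ τ else 0) = pinZ μ I σ := by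
    conv_rhs => rw [pinZ]
    refine Finset.sum_congr rfl fun τ _ => ?_
    refine if_congr ⟨fun h j hj => (h j hj).symm, fun h j hj => (h j hj).symm⟩ rfl rfl
  rw [e3]
  by_cases hZ : pinZ μ I σ = 0
  · have hμσ : μ σ = 0 := by
      have h1 := self_le_pinZ hμ0 I σ
      rw [hZ] at h1
      exact le_antisymm h1 (hμ0 σ)
    rw [hZ, hμσ]
    ring
  · field_simp

lemma chain {μ : (Fin n → Ω) → ℝ} (hμ0 : ∀ σ, 0 ≤ μ σ) (I : Finset (Fin n)) (i i' : Fin n) :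
    ∑ τ, μ τ * (H2 (pinned μ I τ) i i' - H1 (pinned μ I τ) i')
      = condH μ (insert i' I) i := by
  by_cases hI : i' ∈ I
  · rw [Finset.insert_eq_self.mpr hI]
    unfold condH
    refine Finset.sum_congr rfl fun τ _ => ?_
    by_cases hτ : μ τ = 0
    · rw [hτ]; ring
    · rw [chain_mem_pt hμ0 hI hτ i]
  · rw [← chainB hμ0 hI i]
    refine Finset.sum_congr rfl fun τ _ => ?_
    by_cases hτ : μ τ = 0
    · rw [hτ]; ring
    · rw [chainA hμ0 hI hτ i]

lemma keyI {μ : (Fin n → Ω) → ℝ} (hμ0 : ∀ σ, 0 ≤ μ σ) (I : Finset (Fin n)) (i i' : Fin n) :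
    ∑ τ, μ τ * KL2 (marg2 (pinned μ I τ) i i')
        (fun ω ω' => marg (pinned μ I τ) i ω * marg (pinned μ I τ) i' ω')
      = condH μ I i - condH μ (insert i' I) i := by
  have e : ∀ τ : Fin n → Ω, μ τ * KL2 (marg2 (pinned μ I τ) i i')
        (fun ω ω' => marg (pinned μ I τ) i ω * marg (pinned μ I τ) i' ω')
      = μ τ * H1 (pinned μ I τ) i
        - μ τ * (H2 (pinned μ I τ) i i' - H1 (pinned μ I τ) i') := by
    intro τ
    rw [KL2_eq (pinned_nonneg hμ0 I τ) i i']
    ring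
  simp_rw [e]
  rw [Finset.sum_sub_distrib, chain hμ0 I i i']
  rfl

lemma KLterm_nonneg {μ : (Fin n → Ω) → ℝ} (hμ : IsProb μ) (I : Finset (Fin n))
    (i i' : Fin n) (τ : Fin n → Ω) :
    0 ≤ μ τ * KL2 (marg2 (pinned μ I τ) i i')
        (fun ω ω' => marg (pinned μ I τ) i ω * marg (pinned μ I τ) i' ω') := by
  by_cases hτ : μ τ = 0
  · rw [hτ, zero_mul]
  · exact mul_nonneg (hμ.1 τ)
      (KL2_nonneg (pinned_nonneg hμ.1 I τ) (sum_pinned (pinZ_ne_zero hμ.1 hτ)) i i')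

lemma condH_nonneg {μ : (Fin n → Ω) → ℝ} (hμ : IsProb μ) (I : Finset (Fin n)) (i : Fin n) :
    0 ≤ condH μ I i := by
  refine Finset.sum_nonneg fun τ _ => ?_
  by_cases hτ : μ τ = 0
  · rw [hτ, zero_mul]
  · exact mul_nonneg (hμ.1 τ)
      (H1_nonneg (pinned_nonneg hμ.1 I τ) (sum_pinned (pinZ_ne_zero hμ.1 hτ)) i)

lemma condH_le_log {μ : (Fin n → Ω) → ℝ} (hμ : IsProb μ) (I : Finset (Fin n)) (i : Fin n) :
    condH μ I i ≤ Real.log (Fintype.card Ω) := by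
  have key : ∀ τ : Fin n → Ω, μ τ * H1 (pinned μ I τ) i
      ≤ μ τ * Real.log (Fintype.card Ω) := by
    intro τ
    by_cases hτ : μ τ = 0
    · rw [hτ, zero_mul, zero_mul]
    · exact mul_le_mul_of_nonneg_left
        (H1_le_log (pinned_nonneg hμ.1 I τ) (sum_pinned (pinZ_ne_zero hμ.1 hτ)) i) (hμ.1 τ)
  calc condH μ I i ≤ ∑ τ, μ τ * Real.log (Fintype.card Ω) :=
        Finset.sum_le_sum fun τ _ => key τ
    _ = Real.log (Fintype.card Ω) := by rw [← Finset.sum_mul, hμ.2, one_mul]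

end PinProof
namespace PinProof
variable {Ω : Type*} [Fintype Ω] [DecidableEq Ω] {n : ℕ}

lemma comb (f : Finset (Fin n) → ℝ) (θ : ℕ) :
    ∑ I ∈ Finset.univ.powersetCard θ, ∑ i' : Fin n, f (insert i' I)
      = (θ : ℝ) * (∑ I ∈ Finset.univ.powersetCard θ, f I)
        + ((θ : ℝ) + 1) * ∑ J ∈ Finset.univ.powersetCard (θ + 1), f J := by
  have split : ∀ I ∈ (Finset.univ.powersetCard θ : Finset (Finset (Fin n))),
      ∑ i' : Fin n, f (insert i' I)
        = (∑ i' ∈ I, f (insert i' I)) + ∑ i' ∈ Iᶜ, f (insert i' I) :=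
    fun I _ => (Finset.sum_add_sum_compl I _).symm
  rw [Finset.sum_congr rfl split, Finset.sum_add_distrib]
  have e1 : ∑ I ∈ Finset.univ.powersetCard θ, ∑ i' ∈ I, f (insert i' I)
      = (θ : ℝ) * ∑ I ∈ Finset.univ.powersetCard θ, f I := by
    rw [Finset.mul_sum]
    refine Finset.sum_congr rfl fun I hI => ?_
    have hc : I.card = θ := Finset.mem_powersetCard_univ.mp hI
    have : ∀ i' ∈ I, f (insert i' I) = f I := fun i' hi' => by
      rw [Finset.insert_eq_self.mpr hi']
    rw [Finset.sum_congr rfl this, Finset.sum_const, hc, nsmul_eq_mul]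
  have e2 : ∑ I ∈ Finset.univ.powersetCard θ, ∑ i' ∈ Iᶜ, f (insert i' I)
      = ∑ J ∈ Finset.univ.powersetCard (θ + 1), ∑ i' ∈ J, f J := by
    rw [Finset.sum_sigma', Finset.sum_sigma']
    refine Finset.sum_nbij' (fun a => ⟨insert a.2 a.1, a.2⟩) (fun b => ⟨b.1.erase b.2, b.2⟩)
      ?_ ?_ ?_ ?_ ?_
    · rintro ⟨I, i'⟩ hm
      rw [Finset.mem_sigma] at hm ⊢
      obtain ⟨hI, hi'⟩ := hm
      have hni : i' ∉ I := Finset.mem_compl.mp hi'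
      refine ⟨Finset.mem_powersetCard_univ.mpr ?_, Finset.mem_insert_self _ _⟩
      rw [Finset.card_insert_of_notMem hni, Finset.mem_powersetCard_univ.mp hI]
    · rintro ⟨J, i'⟩ hm
      rw [Finset.mem_sigma] at hm ⊢
      obtain ⟨hJ, hi'⟩ := hm
      refine ⟨Finset.mem_powersetCard_univ.mpr ?_, Finset.mem_compl.mpr (Finset.notMem_erase _ _)⟩
      rw [Finset.card_erase_of_mem hi', Finset.mem_powersetCard_univ.mp hJ]
      omega
    · rintro ⟨I, i'⟩ hm
      rw [Finset.mem_sigma] at hm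
      have hni : i' ∉ I := Finset.mem_compl.mp hm.2
      simp [Finset.erase_insert hni]
    · rintro ⟨J, i'⟩ hm
      rw [Finset.mem_sigma] at hm
      simp [Finset.insert_erase hm.2]
    · rintro ⟨I, i'⟩ _
      rfl
  have e4 : ∑ J ∈ Finset.univ.powersetCard (θ + 1), ∑ _i' ∈ J, f J
      = ((θ : ℝ) + 1) * ∑ J ∈ Finset.univ.powersetCard (θ + 1), f J := by
    rw [Finset.mul_sum]
    refine Finset.sum_congr rfl fun J hJ => ?_
    rw [Finset.sum_const, Finset.mem_powersetCard_univ.mp hJ, nsmul_eq_mul]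
    push_cast
    ring
  rw [e1, e2, e4]

noncomputable def SS (μ : (Fin n → Ω) → ℝ) (θ : ℕ) : ℝ :=
  ∑ I ∈ Finset.univ.powersetCard θ, ∑ i : Fin n, condH μ I i

lemma SS_nonneg {μ : (Fin n → Ω) → ℝ} (hμ : IsProb μ) (θ : ℕ) : 0 ≤ SS μ θ :=
  Finset.sum_nonneg fun I _ => Finset.sum_nonneg fun i _ => condH_nonneg hμ I i

lemma SS_eq_zero {μ : (Fin n → Ω) → ℝ} {θ : ℕ} (h : n < θ) : SS μ θ = 0 := by
  unfold SS
  rw [Finset.powersetCard_eq_empty.mpr (by simpa using h), Finset.sum_empty]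

noncomputable def KK (μ : (Fin n → Ω) → ℝ) (θ : ℕ) : ℝ :=
  ∑ I ∈ Finset.univ.powersetCard θ, ∑ i : Fin n, ∑ i' : Fin n,
    (condH μ I i - condH μ (insert i' I) i)

lemma KK_nonneg {μ : (Fin n → Ω) → ℝ} (hμ : IsProb μ) (θ : ℕ) : 0 ≤ KK μ θ :=
  Finset.sum_nonneg fun I _ => Finset.sum_nonneg fun i _ => Finset.sum_nonneg fun i' _ => by
    rw [← keyI hμ.1 I i i']
    exact Finset.sum_nonneg fun τ _ => KLterm_nonneg hμ I i i' τ

lemma KK_eq (μ : (Fin n → Ω) → ℝ) (θ : ℕ) :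
    KK μ θ = (n : ℝ) * SS μ θ - ((θ : ℝ) * SS μ θ + ((θ : ℝ) + 1) * SS μ (θ + 1)) := by
  unfold KK
  simp_rw [Finset.sum_sub_distrib, Finset.sum_const, Finset.card_univ, Fintype.card_fin,
    nsmul_eq_mul]
  have e1 : ∑ I ∈ Finset.univ.powersetCard θ, ∑ i : Fin n, (n : ℝ) * condH μ I i
      = (n : ℝ) * SS μ θ := by
    unfold SS
    rw [Finset.mul_sum]
    exact Finset.sum_congr rfl fun I _ => by rw [Finset.mul_sum]
  have e2 : ∑ I ∈ Finset.univ.powersetCard θ, ∑ i : Fin n, ∑ i' : Fin n,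
        condH μ (insert i' I) i
      = (θ : ℝ) * SS μ θ + ((θ : ℝ) + 1) * SS μ (θ + 1) := by
    rw [Finset.sum_comm]
    have e3 : ∀ i : Fin n, ∑ I ∈ Finset.univ.powersetCard θ, ∑ i' : Fin n,
          condH μ (insert i' I) i
        = (θ : ℝ) * (∑ I ∈ Finset.univ.powersetCard θ, condH μ I i)
          + ((θ : ℝ) + 1) * ∑ J ∈ Finset.univ.powersetCard (θ + 1), condH μ J i :=
      fun i => comb (fun J => condH μ J i) θ
    rw [Finset.sum_congr rfl fun i _ => e3 i, Finset.sum_add_distrib, ← Finset.mul_sum,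
      ← Finset.mul_sum]
    have c1 : ∑ i : Fin n, ∑ I ∈ Finset.univ.powersetCard θ, condH μ I i
        = ∑ I ∈ Finset.univ.powersetCard θ, ∑ i : Fin n, condH μ I i := Finset.sum_comm
    have c2 : ∑ i : Fin n, ∑ J ∈ Finset.univ.powersetCard (θ + 1), condH μ J i
        = ∑ J ∈ Finset.univ.powersetCard (θ + 1), ∑ i : Fin n, condH μ J i := Finset.sum_comm
    unfold SS
    rw [c1, c2]
  rw [e1, e2]

lemma term_eq {μ : (Fin n → Ω) → ℝ} (hμ0 : ∀ σ, 0 ≤ μ σ) (θ : ℕ) :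
    ∑ I ∈ Finset.univ.powersetCard θ, ∑ τ, μ τ *
        ((1 / (n : ℝ) ^ 2) * ∑ i : Fin n, ∑ i' : Fin n,
          KL2 (marg2 (pinned μ I τ) i i')
            (fun ω ω' => marg (pinned μ I τ) i ω * marg (pinned μ I τ) i' ω'))
      = (1 / (n : ℝ) ^ 2) * KK μ θ := by
  unfold KK
  rw [Finset.mul_sum]
  refine Finset.sum_congr rfl fun I _ => ?_
  have e : ∀ τ : Fin n → Ω, μ τ *
        ((1 / (n : ℝ) ^ 2) * ∑ i : Fin n, ∑ i' : Fin n,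
          KL2 (marg2 (pinned μ I τ) i i')
            (fun ω ω' => marg (pinned μ I τ) i ω * marg (pinned μ I τ) i' ω'))
      = (1 / (n : ℝ) ^ 2) * ∑ i : Fin n, ∑ i' : Fin n, μ τ *
          KL2 (marg2 (pinned μ I τ) i i')
            (fun ω ω' => marg (pinned μ I τ) i ω * marg (pinned μ I τ) i' ω') := by
    intro τ
    rw [← mul_assoc, mul_comm (μ τ) (1 / (n : ℝ) ^ 2), mul_assoc]
    congr 1
    rw [Finset.mul_sum]
    refine Finset.sum_congr rfl fun i _ => ?_
    rw [Finset.mul_sum]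
  rw [Finset.sum_congr rfl fun τ _ => e τ, ← Finset.mul_sum]
  congr 1
  rw [Finset.sum_comm]
  refine Finset.sum_congr rfl fun i _ => ?_
  rw [Finset.sum_comm]
  exact Finset.sum_congr rfl fun i' _ => keyI hμ0 I i i'

end PinProof

open PinProof in
/-- Corollary (pinning reduces correlations in expectation): with `Θ` uniform on
`{0,…,T}`, `I ⊆ [n]` a uniform set of size `Θ`, `τ ~ μ` the reference configuration,
and `i, i'` independent uniform coordinates,
`E[ D_KL( μ̂_{i,i'} ‖ μ̂_i ⊗ μ̂_{i'} ) ] ≤ log|Ω| / T`. -/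
theorem expected_KL_pinned_le {Ω : Type*} [Fintype Ω] [DecidableEq Ω]
    (n : ℕ) (hn : 1 ≤ n) (T : ℕ) (hT : 1 ≤ T) (μ : (Fin n → Ω) → ℝ) (hμ : IsProb μ) :
    (1 / (T + 1 : ℝ)) * ∑ θ ∈ Finset.range (T + 1),
      (1 / (n.choose θ : ℝ)) * ∑ I ∈ Finset.univ.powersetCard θ, ∑ τ, μ τ *
        ((1 / (n : ℝ) ^ 2) * ∑ i : Fin n, ∑ i' : Fin n,
          KL2 (marg2 (pinned μ I τ) i i')
            (fun ω ω' => marg (pinned μ I τ) i ω * marg (pinned μ I τ) i' ω'))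
      ≤ Real.log (Fintype.card Ω) / T := by
  classical
  obtain ⟨hμ0, hμ1⟩ := hμ
  have hμ' : IsProb μ := ⟨hμ0, hμ1⟩
  have hΩ : 1 ≤ Fintype.card Ω := by
    by_contra hcon
    push_neg at hcon
    have hz : Fintype.card Ω = 0 := by omega
    haveI he : IsEmpty Ω := Fintype.card_eq_zero_iff.mp hz
    haveI : IsEmpty (Fin n → Ω) := ⟨fun f => he.false (f ⟨0, hn⟩)⟩
    rw [Finset.univ_eq_empty, Finset.sum_empty] at hμ1
    norm_num at hμ1
  have hlog : 0 ≤ Real.log (Fintype.card Ω) := Real.log_nonneg (by exact_mod_cast hΩ)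
  have hNpos : (0 : ℝ) < n := by exact_mod_cast hn
  set L := Real.log (Fintype.card Ω) with hL
  set F : ℕ → ℝ := fun θ => SS μ θ / ((n : ℝ) * (n.choose θ : ℝ)) with hF
  have hFnonneg : ∀ θ, 0 ≤ F θ := fun θ =>
    div_nonneg (SS_nonneg hμ' θ) (by positivity)
  have hF0 : F 0 ≤ L := by
    have hSS0 : SS μ 0 ≤ (n : ℝ) * L := by
      unfold SS
      rw [Finset.powersetCard_zero, Finset.sum_singleton]
      calc ∑ i : Fin n, condH μ ∅ i ≤ ∑ _i : Fin n, L :=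
            Finset.sum_le_sum fun i _ => condH_le_log hμ' ∅ i
        _ = (n : ℝ) * L := by
            rw [Finset.sum_const, Finset.card_univ, Fintype.card_fin, nsmul_eq_mul]
    rw [hF]
    simp only [Nat.choose_zero_right, Nat.cast_one, mul_one]
    rw [div_le_iff₀ hNpos]
    linarith
  have hstep : ∀ θ, (1 / (n.choose θ : ℝ)) * ((1 / (n : ℝ) ^ 2) * KK μ θ)
      ≤ F θ - F (θ + 1) := by
    intro θ
    rcases lt_or_ge θ n with hθ | hθ
    · have hC : (0 : ℝ) < (n.choose θ : ℝ) := by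
        exact_mod_cast Nat.choose_pos (le_of_lt hθ)
      have hC' : (0 : ℝ) < (n.choose (θ + 1) : ℝ) := by
        exact_mod_cast Nat.choose_pos hθ
      have hθN : (θ : ℝ) < (n : ℝ) := by exact_mod_cast hθ
      have hNθ : (0 : ℝ) < (n : ℝ) - θ := by linarith
      have hrel : (n.choose (θ + 1) : ℝ) * ((θ : ℝ) + 1)
          = (n.choose θ : ℝ) * ((n : ℝ) - θ) := by
        have h1 := Nat.choose_succ_right_eq n θ
        have h2 : ((n.choose (θ + 1) * (θ + 1) : ℕ) : ℝ)
            = ((n.choose θ * (n - θ) : ℕ) : ℝ) := by rw [h1]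
        push_cast [Nat.cast_sub (le_of_lt hθ)] at h2
        linarith
      have hKnn : 0 ≤ KK μ θ := KK_nonneg hμ' θ
      have hKval : KK μ θ = SS μ θ * ((n : ℝ) - θ) - SS μ (θ + 1) * ((θ : ℝ) + 1) := by
        rw [KK_eq]; ring
      have hFdiff : F θ - F (θ + 1)
          = KK μ θ / ((n : ℝ) * ((n : ℝ) - θ) * (n.choose θ : ℝ)) := by
        rw [hF]
        simp only
        rw [hKval, div_sub_div _ _ (by positivity) (by positivity), div_eq_div_iff
          (by positivity) (by positivity)]
        linear_combination ((n : ℝ) ^ 2 * (n.choose θ : ℝ) * SS μ (θ + 1)) * hrel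
      rw [hFdiff]
      have e5 : (1 / (n.choose θ : ℝ)) * ((1 / (n : ℝ) ^ 2) * KK μ θ)
          = KK μ θ / ((n : ℝ) * (n : ℝ) * (n.choose θ : ℝ)) := by
        rw [eq_div_iff (by positivity : ((n:ℝ) * (n:ℝ) * (n.choose θ : ℝ)) ≠ 0)]
        field_simp
        try exact Or.inl trivial
      rw [e5]
      apply div_le_div_of_nonneg_left hKnn (by positivity)
      have h6 : (n : ℝ) - θ ≤ (n : ℝ) := by
        have h7 : (0:ℝ) ≤ (θ:ℝ) := by positivity
        linarith
      have h8 : (n : ℝ) * ((n : ℝ) - θ) ≤ (n : ℝ) * (n : ℝ) :=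
        mul_le_mul_of_nonneg_left h6 (le_of_lt hNpos)
      exact mul_le_mul_of_nonneg_right h8 (le_of_lt hC)
    · have hb : SS μ (θ + 1) = 0 := SS_eq_zero (by omega)
      have hK0 : KK μ θ = ((n : ℝ) - θ) * SS μ θ := by
        rw [KK_eq, hb]; ring
      have hKzero : KK μ θ = 0 := by
        rcases eq_or_lt_of_le hθ with he | hlt
        · rw [hK0, ← he, sub_self, zero_mul]
        · rw [hK0, SS_eq_zero hlt, mul_zero]
      have hF1 : F (θ + 1) = 0 := by
        rw [hF]; simp only; rw [hb, zero_div]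
      rw [hKzero, hF1, mul_zero, mul_zero, sub_zero]
      exact hFnonneg θ
  have hrw : ∑ θ ∈ Finset.range (T + 1),
      (1 / (n.choose θ : ℝ)) * ∑ I ∈ Finset.univ.powersetCard θ, ∑ τ, μ τ *
        ((1 / (n : ℝ) ^ 2) * ∑ i : Fin n, ∑ i' : Fin n,
          KL2 (marg2 (pinned μ I τ) i i')
            (fun ω ω' => marg (pinned μ I τ) i ω * marg (pinned μ I τ) i' ω'))
      = ∑ θ ∈ Finset.range (T + 1),
        (1 / (n.choose θ : ℝ)) * ((1 / (n : ℝ) ^ 2) * KK μ θ) :=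
    Finset.sum_congr rfl fun θ _ => by rw [term_eq hμ0 θ]
  rw [hrw]
  have hsum : ∑ θ ∈ Finset.range (T + 1),
      (1 / (n.choose θ : ℝ)) * ((1 / (n : ℝ) ^ 2) * KK μ θ) ≤ L := by
    calc ∑ θ ∈ Finset.range (T + 1),
          (1 / (n.choose θ : ℝ)) * ((1 / (n : ℝ) ^ 2) * KK μ θ)
        ≤ ∑ θ ∈ Finset.range (T + 1), (F θ - F (θ + 1)) :=
          Finset.sum_le_sum fun θ _ => hstep θ
      _ = F 0 - F (T + 1) := Finset.sum_range_sub' F (T + 1)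
      _ ≤ F 0 := by linarith [hFnonneg (T + 1)]
      _ ≤ L := hF0
  have hT1 : (0 : ℝ) < (T : ℝ) + 1 := by positivity
  have hTpos : (0 : ℝ) < (T : ℝ) := by exact_mod_cast hT
  calc (1 / ((T : ℝ) + 1)) * ∑ θ ∈ Finset.range (T + 1),
        (1 / (n.choose θ : ℝ)) * ((1 / (n : ℝ) ^ 2) * KK μ θ)
      ≤ (1 / ((T : ℝ) + 1)) * L := by
        apply mul_le_mul_of_nonneg_left hsum (by positivity)
    _ = L / ((T : ℝ) + 1) := by ring
    _ ≤ L / (T : ℝ) := div_le_div_of_nonneg_left hlog hTpos (by linarith)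
  done
end

section
/- Let Ω be a finite set and ε > 0. For all large enough n, for every probability distribution μ on Ω^n, the following holds. Draw a uniform integer 0 ≤ Θ ≤ ⌈log|Ω|/ε²⌉, a uniformly random set I ⊆ [n] with |I| = Θ, and σ̂ from μ independently; set μ̂ = μ[· | {σ : ∀ i ∈ I, σ_i = σ̂_i}]. Then Σ_{1 ≤ i < j ≤ n} E[ d_TV( μ̂_{i,j}, μ̂_i ⊗ μ̂_j ) ] ≤ ε n². -/
open scoped BigOperators
open Finset

/-- Total variation distance of two mass functions on `Ω × Ω`. -/
noncomputable def dTV2 {Ω : Type*} [Fintype Ω] (p q : Ω → Ω → ℝ) : ℝ :=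
  (1 / 2) * ∑ ω, ∑ ω', |p ω ω' - q ω ω'|

open Real

set_option linter.unusedSectionVars false

section Scalar


/-- scalar KL term -/
noncomputable def klT (a b : ℝ) : ℝ := a * Real.log (a / b)

lemma L1 {t : ℝ} (ht : 0 < t) (ht1 : t ≤ 1) :
    (1 - t) ^ 2 / 2 ≤ t * Real.log t - t + 1 := by
  set f : ℝ → ℝ := fun x => x * Real.log x - x + 1 - (1 - x) ^ 2 / 2 with hf
  have key : AntitoneOn f (Set.Icc t 1) := by
    apply antitoneOn_of_deriv_nonpos (convex_Icc t 1)
    · apply ContinuousOn.sub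
      · exact ((Real.continuous_mul_log.continuousOn.sub continuous_id.continuousOn).add
          continuousOn_const)
      · fun_prop
    · intro x hx
      rw [interior_Icc] at hx
      have hx0 : x ≠ 0 := by nlinarith [hx.1]
      apply DifferentiableAt.differentiableWithinAt
      apply DifferentiableAt.sub
      · exact ((Real.hasDerivAt_mul_log hx0).differentiableAt.sub differentiable_id.differentiableAt).add (differentiableAt_const _)
      · fun_prop
    · intro x hx
      rw [interior_Icc] at hx
      have hx0 : (0:ℝ) < x := lt_trans ht hx.1
      have hd : HasDerivAt f (Real.log x + 1 - 1 - (2 * (1 - x) * (-1)) / 2) x := by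
        have h1 := Real.hasDerivAt_mul_log (ne_of_gt hx0)
        have h2 : HasDerivAt (fun x : ℝ => (1 - x) ^ 2 / 2) ((2 * (1 - x) * (-1)) / 2) x := by
          have : HasDerivAt (fun x : ℝ => (1 - x)) (-1) x := by
            simpa using (hasDerivAt_id x).const_sub 1
          simpa using ((this.pow 2).div_const 2)
        exact ((h1.sub (hasDerivAt_id x)).add_const 1).sub h2
      rw [hd.deriv]
      have : Real.log x ≤ x - 1 := Real.log_le_sub_one_of_pos hx0
      nlinarith
  have := key (Set.mem_Icc.2 ⟨le_refl t, ht1⟩) (Set.mem_Icc.2 ⟨ht1, le_refl 1⟩) ht1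
  simp [hf] at this
  nlinarith [this]

lemma L2 {t : ℝ} (ht : 0 < t) (ht1 : t ≤ 1) :
    (1 - t) ^ 2 / 2 ≤ t - Real.log t - 1 := by
  set f : ℝ → ℝ := fun x => x - Real.log x - 1 - (1 - x) ^ 2 / 2 with hf
  have key : AntitoneOn f (Set.Icc t 1) := by
    apply antitoneOn_of_deriv_nonpos (convex_Icc t 1)
    · apply ContinuousOn.sub
      · apply ContinuousOn.sub
        · apply ContinuousOn.sub continuous_id.continuousOn
          apply Real.continuousOn_log.mono
          intro x hx
          simp only [Set.mem_compl_iff, Set.mem_singleton_iff]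
          nlinarith [hx.1, (Set.mem_Icc.1 hx).1]
        · exact continuousOn_const
      · fun_prop
    · intro x hx
      rw [interior_Icc] at hx
      have hx0 : (0:ℝ) < x := lt_trans ht hx.1
      apply DifferentiableAt.differentiableWithinAt
      have := Real.differentiableAt_log (ne_of_gt hx0)
      fun_prop
    · intro x hx
      rw [interior_Icc] at hx
      have hx0 : (0:ℝ) < x := lt_trans ht hx.1
      have hd : HasDerivAt f (1 - x⁻¹ - (2 * (1 - x) * (-1)) / 2) x := by
        have h1 : HasDerivAt (fun x:ℝ => x - Real.log x - 1) (1 - x⁻¹) x := by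
          simpa using ((hasDerivAt_id x).sub (Real.hasDerivAt_log (ne_of_gt hx0))).sub_const 1
        have h2 : HasDerivAt (fun x : ℝ => (1 - x) ^ 2 / 2) ((2 * (1 - x) * (-1)) / 2) x := by
          have : HasDerivAt (fun x : ℝ => (1 - x)) (-1) x := by
            simpa using (hasDerivAt_id x).const_sub 1
          simpa using ((this.pow 2).div_const 2)
        exact h1.sub h2
      rw [hd.deriv]
      have hinv : x * x⁻¹ = 1 := mul_inv_cancel₀ (ne_of_gt hx0)
      nlinarith [sq_nonneg (x - 1), mul_pos hx0 hx0]
  have := key (Set.mem_Icc.2 ⟨le_refl t, ht1⟩) (Set.mem_Icc.2 ⟨ht1, le_refl 1⟩) ht1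
  simp [hf] at this
  nlinarith [this]





/-- pointwise Pinsker-type bound -/
lemma klT_key {a b : ℝ} (ha : 0 ≤ a) (hb : 0 ≤ b) (hab : b = 0 → a = 0) :
    (a - b) ^ 2 / (2 * max a b) ≤ klT a b - a + b := by
  rcases eq_or_lt_of_le ha with h0 | ha
  · -- a = 0
    rw [← h0]
    simp only [klT, zero_mul, max_eq_right hb]  -- max 0 b = b
    rcases eq_or_lt_of_le hb with hb0 | hb
    · rw [← hb0]; norm_num
    · rw [div_le_iff₀ (by positivity)]
      ring_nf
      nlinarith
  · have hb' : 0 < b := by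
      rcases eq_or_lt_of_le hb with hb0 | h
      · exact absurd (hab hb0.symm) (ne_of_gt ha)
      · exact h
    rcases le_total a b with hle | hle
    · -- a ≤ b, t = a/b
      have ht : 0 < a / b := by positivity
      have ht1 : a / b ≤ 1 := (div_le_one hb').2 hle
      have hmul := mul_le_mul_of_nonneg_left (L1 ht ht1) hb
      have e1 : b * ((1 - a / b) ^ 2 / 2) = (a - b) ^ 2 / (2 * b) := by
        field_simp; ring
      have e2 : b * (a / b * Real.log (a / b) - a / b + 1)
          = a * Real.log (a / b) - a + b := by
        field_simp
      rw [e1, e2] at hmul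
      rw [max_eq_right hle]
      simpa [klT] using hmul
    · -- b ≤ a, t = b/a
      have ht : 0 < b / a := by positivity
      have ht1 : b / a ≤ 1 := (div_le_one ha).2 hle
      have hmul := mul_le_mul_of_nonneg_left (L2 ht ht1) (le_of_lt ha)
      have hlog : Real.log (b / a) = - Real.log (a / b) := by
        rw [← Real.log_inv]; congr 1; field_simp
      have e1 : a * ((1 - b / a) ^ 2 / 2) = (a - b) ^ 2 / (2 * a) := by
        field_simp
      have e2 : a * (b / a - Real.log (b / a) - 1)
          = a * Real.log (a / b) - a + b := by
        rw [hlog]; field_simp; ring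
      rw [e1, e2] at hmul
      rw [max_eq_left hle]
      simpa [klT] using hmul

lemma klT_sub_le {a b : ℝ} (ha : 0 ≤ a) (hb : 0 ≤ b) (hab : b = 0 → a = 0) :
    a - b ≤ klT a b := by
  have := klT_key ha hb hab
  have h2 : 0 ≤ (a - b) ^ 2 / (2 * max a b) := by positivity
  linarith

lemma klT_self (a : ℝ) : klT a a = 0 := by
  rcases eq_or_ne a 0 with h | h
  · simp [klT, h]
  · simp [klT, div_self h]

/-- Pinsker: (∑|p−q|)² ≤ 4 ∑ klT p q for probability vectors with q ≪ p. -/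
lemma pinsker {γ : Type*} [Fintype γ] (p q : γ → ℝ) (hp : ∀ x, 0 ≤ p x)
    (hq : ∀ x, 0 ≤ q x) (hp1 : ∑ x, p x = 1) (hq1 : ∑ x, q x = 1)
    (habs : ∀ x, q x = 0 → p x = 0) :
    (∑ x, |p x - q x|) ^ 2 ≤ 4 * ∑ x, klT (p x) (q x) := by
  set m : γ → ℝ := fun x => max (p x) (q x) with hm
  have hm0 : ∀ x, 0 ≤ m x := fun x => le_trans (hp x) (le_max_left _ _)
  have key : ∀ x, |p x - q x| = (|p x - q x| / Real.sqrt (2 * m x)) * Real.sqrt (2 * m x) := by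
    intro x
    rcases eq_or_lt_of_le (hm0 x) with h0 | h0
    · have hpx : p x = 0 := le_antisymm (le_trans (le_max_left _ (q x)) h0.symm.le) (hp x)
      have hqx : q x = 0 := le_antisymm (le_trans (le_max_right (p x) _) h0.symm.le) (hq x)
      simp [hpx, hqx]
    · rw [div_mul_cancel₀]
      exact (Real.sqrt_pos.2 (by linarith)).ne'
  calc (∑ x, |p x - q x|) ^ 2
      = (∑ x, (|p x - q x| / Real.sqrt (2 * m x)) * Real.sqrt (2 * m x)) ^ 2 := by
        congr 1; exact Finset.sum_congr rfl fun x _ => key x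
    _ ≤ (∑ x, (|p x - q x| / Real.sqrt (2 * m x)) ^ 2) * (∑ x, (Real.sqrt (2 * m x)) ^ 2) :=
        Finset.sum_mul_sq_le_sq_mul_sq _ _ _
    _ ≤ (∑ x, (klT (p x) (q x) - p x + q x)) * (∑ x, (2 * m x)) := by
        apply mul_le_mul
        · apply Finset.sum_le_sum
          intro x _
          rw [div_pow, Real.sq_sqrt (by have := hm0 x; linarith), sq_abs]
          rcases eq_or_lt_of_le (hm0 x) with h0 | h0
          · have hpx : p x = 0 := le_antisymm (le_trans (le_max_left _ (q x)) h0.symm.le) (hp x)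
            have hqx : q x = 0 := le_antisymm (le_trans (le_max_right (p x) _) h0.symm.le) (hq x)
            simp [hpx, hqx, klT]
          · exact klT_key (hp x) (hq x) (habs x)
        · apply Finset.sum_le_sum
          intro x _
          rw [Real.sq_sqrt (by have := hm0 x; linarith)]
        · positivity
        · apply Finset.sum_nonneg; intro x _
          have := klT_key (hp x) (hq x) (habs x)
          have h2 : 0 ≤ (p x - q x) ^ 2 / (2 * max (p x) (q x)) := by
            apply div_nonneg (sq_nonneg _)
            have := le_max_left (p x) (q x); have := hp x; linarith
          linarith
    _ ≤ (∑ x, klT (p x) (q x)) * 4 := by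
        rw [Finset.sum_add_distrib, Finset.sum_sub_distrib, hp1, hq1]
        have h4 : ∑ x, 2 * m x ≤ 4 := by
          calc ∑ x, 2 * m x ≤ ∑ x, 2 * (p x + q x) := by
                apply Finset.sum_le_sum; intro x _
                have : m x ≤ p x + q x := max_le (by linarith [hq x]) (by linarith [hp x])
                linarith
            _ = 4 := by rw [← Finset.mul_sum, Finset.sum_add_distrib, hp1, hq1]; norm_num
        have hk : 0 ≤ ∑ x, klT (p x) (q x) := by
          have : (0:ℝ) = ∑ x, (p x - q x) := by rw [Finset.sum_sub_distrib, hp1, hq1]; ring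
          rw [this]
          exact Finset.sum_le_sum fun x _ => klT_sub_le (hp x) (hq x) (habs x)
        calc (∑ x, klT (p x) (q x) - 1 + 1) * (∑ x, 2 * m x)
            = (∑ x, klT (p x) (q x)) * (∑ x, 2 * m x) := by congr 1; ring
          _ ≤ (∑ x, klT (p x) (q x)) * 4 := by
              apply mul_le_mul_of_nonneg_left h4 hk
    _ = 4 * ∑ x, klT (p x) (q x) := by ring

lemma kl_sum_nonneg {γ : Type*} [Fintype γ] (p q : γ → ℝ) (hp : ∀ x, 0 ≤ p x)
    (hq : ∀ x, 0 ≤ q x) (hp1 : ∑ x, p x = 1) (hq1 : ∑ x, q x = 1)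
    (habs : ∀ x, q x = 0 → p x = 0) :
    0 ≤ ∑ x, klT (p x) (q x) := by
  have : (0:ℝ) = ∑ x, (p x - q x) := by rw [Finset.sum_sub_distrib, hp1, hq1]; ring
  rw [this]
  exact Finset.sum_le_sum fun x _ => klT_sub_le (hp x) (hq x) (habs x)

/-- weighted Cauchy–Schwarz -/
lemma CSsum {α : Type*} (s : Finset α) (w d : α → ℝ) (hw : ∀ a ∈ s, 0 ≤ w a)
    (hd : ∀ a ∈ s, 0 ≤ d a) :
    ∑ a ∈ s, w a * d a ≤ Real.sqrt (∑ a ∈ s, w a) * Real.sqrt (∑ a ∈ s, w a * (d a) ^ 2) := by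
  have h1 : ∀ a ∈ s, w a * d a = Real.sqrt (w a) * (Real.sqrt (w a) * d a) := by
    intro a ha
    rw [← mul_assoc, Real.mul_self_sqrt (hw a ha)]
  rw [Finset.sum_congr rfl h1]
  have := Finset.sum_mul_sq_le_sq_mul_sq s (fun a => Real.sqrt (w a)) (fun a => Real.sqrt (w a) * d a)
  have h2 : ∑ a ∈ s, Real.sqrt (w a) ^ 2 = ∑ a ∈ s, w a :=
    Finset.sum_congr rfl fun a ha => Real.sq_sqrt (hw a ha)
  have h3 : ∑ a ∈ s, (Real.sqrt (w a) * d a) ^ 2 = ∑ a ∈ s, w a * d a ^ 2 := by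
    apply Finset.sum_congr rfl; intro a ha
    rw [mul_pow, Real.sq_sqrt (hw a ha)]
  rw [h2, h3] at this
  have hnn : 0 ≤ ∑ a ∈ s, Real.sqrt (w a) * (Real.sqrt (w a) * d a) := by
    apply Finset.sum_nonneg; intro a ha
    have := hd a ha; positivity
  calc ∑ a ∈ s, Real.sqrt (w a) * (Real.sqrt (w a) * d a)
      = Real.sqrt ((∑ a ∈ s, Real.sqrt (w a) * (Real.sqrt (w a) * d a)) ^ 2) := by
        rw [Real.sqrt_sq hnn]
    _ ≤ Real.sqrt ((∑ a ∈ s, w a) * (∑ a ∈ s, w a * d a ^ 2)) := Real.sqrt_le_sqrt this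
    _ = _ := Real.sqrt_mul (Finset.sum_nonneg hw) _

end Scalar

section Ent
variable {Ω : Type*} [Fintype Ω] [DecidableEq Ω] {n : ℕ}

/-- entropy of a mass function on `Ω` -/
noncomputable def ent (p : Ω → ℝ) : ℝ := ∑ ω, Real.negMulLog (p ω)

lemma ent_nonneg {p : Ω → ℝ} (h0 : ∀ ω, 0 ≤ p ω) (h1 : ∀ ω, p ω ≤ 1) : 0 ≤ ent p :=
  Finset.sum_nonneg fun ω _ => Real.negMulLog_nonneg (h0 ω) (h1 ω)

lemma ent_le_log_card {p : Ω → ℝ} (h0 : ∀ ω, 0 ≤ p ω) (h1 : ∑ ω, p ω = 1) :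
    ent p ≤ Real.log (Fintype.card Ω) := by
  rcases isEmpty_or_nonempty Ω with hΩ | hΩ
  · simp [ent]
  have hk : (0:ℝ) < Fintype.card Ω := by
    have := Fintype.card_pos (α := Ω); positivity
  set k : ℝ := (Fintype.card Ω : ℝ) with hkdef
  -- pointwise : negMulLog x ≤ 1/k - x + x * log k  for 0 ≤ x
  have pointwise : ∀ x : ℝ, 0 ≤ x → Real.negMulLog x ≤ 1 / k - x + x * Real.log k := by
    intro x hx
    rcases eq_or_lt_of_le hx with h | h
    · rw [← h]; simp [Real.negMulLog]; positivity
    · have hlog : Real.log (1 / (k * x)) ≤ 1 / (k * x) - 1 :=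
        Real.log_le_sub_one_of_pos (by positivity)
      have hx' : x ≠ 0 := ne_of_gt h
      have e : Real.log (1 / (k * x)) = - Real.log k - Real.log x := by
        rw [one_div, Real.log_inv, Real.log_mul (ne_of_gt hk) hx']; ring
      rw [e] at hlog
      have := mul_le_mul_of_nonneg_left hlog hx
      have e2 : x * (1 / (k * x) - 1) = 1 / k - x := by field_simp
      rw [e2] at this
      rw [Real.negMulLog]
      nlinarith
  calc ent p ≤ ∑ ω, (1 / k - p ω + p ω * Real.log k) :=
        Finset.sum_le_sum fun ω _ => pointwise (p ω) (h0 ω)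
    _ = (Fintype.card Ω : ℝ) * (1 / k) - ∑ ω, p ω + (∑ ω, p ω) * Real.log k := by
        rw [Finset.sum_add_distrib, Finset.sum_sub_distrib, Finset.sum_const, card_univ,
          nsmul_eq_mul, ← Finset.sum_mul]
    _ ≤ 1 - ∑ ω, p ω + (∑ ω, p ω) * Real.log k := by
        rw [mul_one_div, div_self (ne_of_gt hk)]
    _ ≤ Real.log k := by rw [h1]; norm_num
end Ent

section Pinned
variable {Ω : Type*} [Fintype Ω] [DecidableEq Ω] {n : ℕ}
variable {μ : (Fin n → Ω) → ℝ} {I : Finset (Fin n)} {τ : Fin n → Ω}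

lemma pinZ_nonneg (h0 : ∀ σ, 0 ≤ μ σ) : 0 ≤ pinZ μ I τ :=
  Finset.sum_nonneg fun σ _ => by split <;> [skip; rfl] <;> exact h0 σ

lemma le_pinZ (h0 : ∀ σ, 0 ≤ μ σ) (σ : Fin n → Ω) (hσ : ∀ i ∈ I, σ i = τ i) :
    μ σ ≤ pinZ μ I τ := by
  rw [pinZ]
  have : μ σ = if (∀ i ∈ I, σ i = τ i) then μ σ else 0 := by rw [if_pos hσ]
  rw [this]
  apply Finset.single_le_sum (f := fun σ' => if (∀ i ∈ I, σ' i = τ i) then μ σ' else 0)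
    (fun σ' _ => by split <;> [skip; rfl] <;> exact h0 σ') (Finset.mem_univ σ)

lemma self_le_pinZ (h0 : ∀ σ, 0 ≤ μ σ) : μ τ ≤ pinZ μ I τ :=
  le_pinZ h0 τ (fun _ _ => rfl)

lemma pinned_nonneg (h0 : ∀ σ, 0 ≤ μ σ) (σ : Fin n → Ω) : 0 ≤ pinned μ I τ σ := by
  rw [pinned]
  split
  · exact div_nonneg (h0 σ) (pinZ_nonneg h0)
  · rfl

lemma sum_pinned (h0 : ∀ σ, 0 ≤ μ σ) (hZ : pinZ μ I τ ≠ 0) : ∑ σ, pinned μ I τ σ = 1 := by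
  rw [show ∑ σ, pinned μ I τ σ = (∑ σ, if (∀ i ∈ I, σ i = τ i) then μ σ else 0) / pinZ μ I τ by
    rw [Finset.sum_div]; apply Finset.sum_congr rfl; intro σ _
    rw [pinned]; split <;> simp]
  rw [← pinZ, div_self hZ]

lemma pinned_of_Z_eq_zero (h0 : ∀ σ, 0 ≤ μ σ) (hZ : pinZ μ I τ = 0) :
    pinned μ I τ = fun _ => 0 := by
  funext σ
  rw [pinned]
  split
  · rw [hZ, div_zero]
  · rfl

lemma sum_pinned_le (h0 : ∀ σ, 0 ≤ μ σ) : ∑ σ, pinned μ I τ σ ≤ 1 := by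
  rcases eq_or_ne (pinZ μ I τ) 0 with hZ | hZ
  · rw [pinned_of_Z_eq_zero h0 hZ]; simp
  · rw [sum_pinned h0 hZ]

lemma pinned_congr {τ' : Fin n → Ω} (h : ∀ i ∈ I, τ i = τ' i) :
    pinned μ I τ = pinned μ I τ' := by
  have hZ : pinZ μ I τ = pinZ μ I τ' := by
    rw [pinZ, pinZ]; apply Finset.sum_congr rfl; intro σ _
    congr 1
    simp only [eq_iff_iff]
    constructor <;> intro hh i hi
    · rw [← h i hi]; exact hh i hi
    · rw [h i hi]; exact hh i hi
  funext σ
  rw [pinned, pinned]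
  rw [hZ]
  congr 1
  simp only [eq_iff_iff]
  constructor <;> intro hh i hi
  · rw [← h i hi]; exact hh i hi
  · rw [h i hi]; exact hh i hi
end Pinned



section Marg
variable {Ω : Type*} [Fintype Ω] [DecidableEq Ω] {n : ℕ}
variable {p : (Fin n → Ω) → ℝ}

lemma marg_nonneg (h0 : ∀ σ, 0 ≤ p σ) (i : Fin n) (ω : Ω) : 0 ≤ marg p i ω :=
  Finset.sum_nonneg fun σ _ => by by_cases h : σ i = ω <;> simp [h, h0 σ]

lemma marg2_nonneg (h0 : ∀ σ, 0 ≤ p σ) (i j : Fin n) (ω ω' : Ω) : 0 ≤ marg2 p i j ω ω' :=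
  Finset.sum_nonneg fun σ _ => by by_cases h : σ i = ω ∧ σ j = ω' <;> simp [h, h0 σ]

lemma sum_marg_s2 (i : Fin n) : ∑ ω, marg p i ω = ∑ σ, p σ := by
  simp only [marg]; rw [Finset.sum_comm]
  apply Finset.sum_congr rfl; intro σ _
  simp

lemma sum_marg2_right (i j : Fin n) (ω : Ω) :
    ∑ ω', marg2 p i j ω ω' = marg p i ω := by
  simp only [marg2, marg]; rw [Finset.sum_comm]
  apply Finset.sum_congr rfl; intro σ _
  by_cases h : σ i = ω
  · simp [h]
  · simp [h]

lemma sum_marg2_left (i j : Fin n) (ω' : Ω) :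
    ∑ ω, marg2 p i j ω ω' = marg p j ω' := by
  simp only [marg2, marg]; rw [Finset.sum_comm]
  apply Finset.sum_congr rfl; intro σ _
  by_cases h : σ j = ω'
  · simp [h]
  · simp [h]

lemma marg2_le_marg_left (h0 : ∀ σ, 0 ≤ p σ) (i j : Fin n) (ω ω' : Ω) :
    marg2 p i j ω ω' ≤ marg p i ω := by
  rw [marg2, marg]
  apply Finset.sum_le_sum; intro σ _
  by_cases h : σ i = ω ∧ σ j = ω'
  · rw [if_pos h, if_pos h.1]
  · rw [if_neg h]
    split
    · exact h0 σ
    · rfl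

lemma marg2_le_marg_right (h0 : ∀ σ, 0 ≤ p σ) (i j : Fin n) (ω ω' : Ω) :
    marg2 p i j ω ω' ≤ marg p j ω' := by
  rw [marg2, marg]
  apply Finset.sum_le_sum; intro σ _
  by_cases h : σ i = ω ∧ σ j = ω'
  · rw [if_pos h, if_pos h.2]
  · rw [if_neg h]
    split
    · exact h0 σ
    · rfl

lemma marg_le_one (h0 : ∀ σ, 0 ≤ p σ) (h1 : ∑ σ, p σ ≤ 1) (i : Fin n) (ω : Ω) :
    marg p i ω ≤ 1 := by
  calc marg p i ω ≤ ∑ ω'', marg p i ω'' := by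
        apply Finset.single_le_sum (fun ω'' _ => marg_nonneg h0 i ω'') (Finset.mem_univ ω)
    _ = ∑ σ, p σ := sum_marg_s2 i
    _ ≤ 1 := h1

end Marg

section Core
variable {Ω : Type*} [Fintype Ω] [DecidableEq Ω] {n : ℕ}

lemma pinZ_congr {μ : (Fin n → Ω) → ℝ} {I : Finset (Fin n)} {τ τ' : Fin n → Ω}
    (h : ∀ i ∈ I, τ i = τ' i) : pinZ μ I τ = pinZ μ I τ' := by
  rw [pinZ, pinZ]; apply Finset.sum_congr rfl; intro σ _
  congr 1
  simp only [eq_iff_iff]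
  constructor <;> intro hh i hi
  · rw [← h i hi]; exact hh i hi
  · rw [h i hi]; exact hh i hi

lemma pinZ_singleton (ν : (Fin n → Ω) → ℝ) (j : Fin n) (ω' : Ω) :
    pinZ ν {j} (fun _ => ω') = marg ν j ω' := by
  simp only [pinZ, marg]
  apply Finset.sum_congr rfl; intro σ _
  congr 1
  simp

lemma marg_pinned_single (ν : (Fin n → Ω) → ℝ) (i j : Fin n) (ω ω' : Ω) :
    marg (pinned ν {j} (fun _ => ω')) i ω = marg2 ν i j ω ω' / marg ν j ω' := by
  simp only [marg, marg2, pinned, pinZ_singleton]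
  rw [Finset.sum_div]
  apply Finset.sum_congr rfl; intro σ _
  by_cases h1 : σ i = ω <;> by_cases h2 : σ j = ω' <;>
    simp [h1, h2, zero_div]

lemma pinned_insert {μ : (Fin n → Ω) → ℝ} (h0 : ∀ σ, 0 ≤ μ σ) {I : Finset (Fin n)}
    {j : Fin n} (τ : Fin n → Ω) :
    pinned μ (insert j I) τ = pinned (pinned μ I τ) {j} τ := by
  set Z := pinZ μ I τ with hZdef
  set Z' := pinZ μ (insert j I) τ with hZ'def
  have hZsingle : pinZ (pinned μ I τ) {j} τ = Z' / Z := by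
    rw [pinZ, hZ'def, pinZ, Finset.sum_div]
    apply Finset.sum_congr rfl; intro σ _
    have hsing : (∀ i ∈ ({j} : Finset (Fin n)), σ i = τ i) ↔ σ j = τ j := by simp
    have hins : (∀ i ∈ insert j I, σ i = τ i) ↔ (σ j = τ j ∧ ∀ i ∈ I, σ i = τ i) :=
      Finset.forall_mem_insert _ _ _
    simp only [pinned]
    by_cases h1 : σ j = τ j <;> by_cases h2 : ∀ i ∈ I, σ i = τ i
    · rw [if_pos (hsing.2 h1), if_pos h2, if_pos (hins.2 ⟨h1, h2⟩)]
    · rw [if_pos (hsing.2 h1), if_neg h2, if_neg (fun h => h2 (hins.1 h).2), zero_div]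
    · rw [if_neg (fun h => h1 (hsing.1 h)), if_neg (fun h => h1 (hins.1 h).1), zero_div]
    · rw [if_neg (fun h => h1 (hsing.1 h)), if_neg (fun h => h1 (hins.1 h).1), zero_div]
  funext σ
  have hsing : (∀ i ∈ ({j} : Finset (Fin n)), σ i = τ i) ↔ σ j = τ j := by simp
  have hins : (∀ i ∈ insert j I, σ i = τ i) ↔ (σ j = τ j ∧ ∀ i ∈ I, σ i = τ i) :=
    Finset.forall_mem_insert _ _ _
  simp only [pinned]
  rw [hZsingle]
  by_cases h1 : σ j = τ j <;> by_cases h2 : ∀ i ∈ I, σ i = τ i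
  · rw [if_pos (hins.2 ⟨h1, h2⟩), if_pos (hsing.2 h1), if_pos h2]
    rcases eq_or_ne Z 0 with hZ | hZ
    · have hμ : μ σ = 0 := le_antisymm (hZ ▸ le_pinZ h0 σ h2) (h0 σ)
      simp [hμ, zero_div]
    · rcases eq_or_ne Z' 0 with hZ' | hZ'
      · rw [hZ']; simp only [zero_div, div_zero]
        rw [div_eq_zero_iff]
        exact Or.inr hZ'
      · rw [div_div_div_cancel_right₀]
        exact hZ
  · rw [if_neg (fun h => h2 (hins.1 h).2), if_pos (hsing.2 h1), if_neg h2, zero_div]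
  · rw [if_neg (fun h => h1 (hins.1 h).1), if_neg (fun h => h1 (hsing.1 h))]
  · rw [if_neg (fun h => h1 (hins.1 h).1), if_neg (fun h => h1 (hsing.1 h))]

/-- exchange lemma: reweighting the reference sample by the pinned marginal. -/
lemma exchange {μ : (Fin n → Ω) → ℝ} (h0 : ∀ σ, 0 ≤ μ σ) (I : Finset (Fin n))
    (f : (Fin n → Ω) → ℝ) (hf : ∀ τ τ', (∀ i ∈ I, τ i = τ' i) → f τ = f τ')
    (j : Fin n) (ω : Ω) :
    ∑ τ, μ τ * marg (pinned μ I τ) j ω * f τ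
      = ∑ τ, (if τ j = ω then μ τ * f τ else 0) := by
  have step1 : ∀ τ : Fin n → Ω, μ τ * marg (pinned μ I τ) j ω * f τ
      = ∑ σ, (if σ j = ω then
          (if (∀ i ∈ I, σ i = τ i) then μ τ * (μ σ / pinZ μ I τ) * f τ else 0) else 0) := by
    intro τ
    rw [marg, Finset.mul_sum, Finset.sum_mul]
    apply Finset.sum_congr rfl; intro σ _
    simp only [pinned]
    by_cases h1 : σ j = ω
    · rw [if_pos h1, if_pos h1]
      by_cases h2 : ∀ i ∈ I, σ i = τ i
      · rw [if_pos h2, if_pos h2]; try ring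
      · rw [if_neg h2, if_neg h2]; try ring
    · rw [if_neg h1, if_neg h1]; try ring
  rw [Finset.sum_congr rfl (fun τ _ => step1 τ), Finset.sum_comm]
  apply Finset.sum_congr rfl; intro σ _
  by_cases h1 : σ j = ω
  · simp only [if_pos h1]
    have hterm : ∀ τ : Fin n → Ω,
        (if (∀ i ∈ I, σ i = τ i) then μ τ * (μ σ / pinZ μ I τ) * f τ else 0)
          = (if (∀ i ∈ I, σ i = τ i) then μ τ else 0) * (μ σ / pinZ μ I σ * f σ) := by
      intro τ
      by_cases h2 : ∀ i ∈ I, σ i = τ i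
      · rw [if_pos h2, if_pos h2]
        have hZ : pinZ μ I τ = pinZ μ I σ := pinZ_congr (fun i hi => (h2 i hi).symm)
        have hfτ : f τ = f σ := hf τ σ (fun i hi => (h2 i hi).symm)
        rw [hZ, hfτ]; ring
      · rw [if_neg h2, if_neg h2, zero_mul]
    rw [Finset.sum_congr rfl (fun τ _ => hterm τ), ← Finset.sum_mul]
    have hsum : ∑ τ, (if (∀ i ∈ I, σ i = τ i) then μ τ else 0) = pinZ μ I σ := by
      rw [pinZ]
      apply Finset.sum_congr rfl; intro τ _
      congr 1
      simp only [eq_iff_iff]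
      constructor <;> intro hh i hi
      · exact (hh i hi).symm
      · exact (hh i hi).symm
    rw [hsum]
    rcases eq_or_ne (pinZ μ I σ) 0 with hZ | hZ
    · have : μ σ = 0 := le_antisymm (hZ ▸ le_pinZ h0 σ (fun i _ => rfl)) (h0 σ)
      rw [hZ, this]; ring
    · field_simp
      try ring
  · simp only [if_neg h1, Finset.sum_const_zero]

end Core


section Identity
variable {Ω : Type*} [Fintype Ω] [DecidableEq Ω] {n : ℕ}

/-- conditional entropy identity: mutual information as entropy drop. -/
lemma cond_entropy_identity {ν : (Fin n → Ω) → ℝ} (h0 : ∀ σ, 0 ≤ ν σ)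
    (h1 : ∑ σ, ν σ = 1) (i j : Fin n) :
    ent (marg ν i) - ∑ ω', marg ν j ω' * ent (marg (pinned ν {j} (fun _ => ω')) i)
      = ∑ ω, ∑ ω', klT (marg2 ν i j ω ω') (marg ν i ω * marg ν j ω') := by
  have hp0 : ∀ ω ω', 0 ≤ marg2 ν i j ω ω' := marg2_nonneg h0 i j
  have hps : ∀ ω ω', marg2 ν i j ω ω' ≤ marg ν j ω' := marg2_le_marg_right h0 i j
  have hpr : ∀ ω ω', marg2 ν i j ω ω' ≤ marg ν i ω := marg2_le_marg_left h0 i j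
  have e1 : ent (marg ν i) = ∑ ω, ∑ ω', -(marg2 ν i j ω ω' * Real.log (marg ν i ω)) := by
    rw [ent]
    apply Finset.sum_congr rfl; intro ω _
    have e : ∑ ω', -(marg2 ν i j ω ω' * Real.log (marg ν i ω))
        = -((∑ ω', marg2 ν i j ω ω') * Real.log (marg ν i ω)) := by
      rw [Finset.sum_mul, ← Finset.sum_neg_distrib]
    rw [e, sum_marg2_right, Real.negMulLog, neg_mul]
  have e2 : ∑ ω', marg ν j ω' * ent (marg (pinned ν {j} (fun _ => ω')) i)
      = ∑ ω, ∑ ω', -(marg2 ν i j ω ω' * (Real.log (marg2 ν i j ω ω') - Real.log (marg ν j ω'))) := by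
    rw [Finset.sum_comm]
    apply Finset.sum_congr rfl; intro ω' _
    rw [ent, Finset.mul_sum]
    apply Finset.sum_congr rfl; intro ω _
    rw [marg_pinned_single]
    by_cases hp : marg2 ν i j ω ω' = 0
    · simp [hp]
    · have hppos : 0 < marg2 ν i j ω ω' := lt_of_le_of_ne (hp0 ω ω') (Ne.symm hp)
      have hspos : 0 < marg ν j ω' := lt_of_lt_of_le hppos (hps ω ω')
      rw [Real.negMulLog, Real.log_div hp (ne_of_gt hspos)]
      field_simp
  rw [e1, e2, ← Finset.sum_sub_distrib]
  apply Finset.sum_congr rfl; intro ω _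
  rw [← Finset.sum_sub_distrib]
  apply Finset.sum_congr rfl; intro ω' _
  by_cases hp : marg2 ν i j ω ω' = 0
  · simp [hp, klT]
  · have hppos : 0 < marg2 ν i j ω ω' := lt_of_le_of_ne (hp0 ω ω') (Ne.symm hp)
    have hspos : 0 < marg ν j ω' := lt_of_lt_of_le hppos (hps ω ω')
    have hrpos : 0 < marg ν i ω := lt_of_lt_of_le hppos (hpr ω ω')
    rw [klT, Real.log_div hp (by positivity), Real.log_mul (ne_of_gt hrpos) (ne_of_gt hspos)]
    ring

/-- one-step entropy decrement identity, averaged over the reference sample. -/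
lemma step3a {μ : (Fin n → Ω) → ℝ} (h0 : ∀ σ, 0 ≤ μ σ) (I : Finset (Fin n))
    (i j : Fin n) :
    ∑ τ, μ τ * (∑ ω, ∑ ω', klT (marg2 (pinned μ I τ) i j ω ω')
        (marg (pinned μ I τ) i ω * marg (pinned μ I τ) j ω'))
      = ∑ τ, μ τ * ent (marg (pinned μ I τ) i)
        - ∑ τ, μ τ * ent (marg (pinned μ (insert j I) τ) i) := by
  set G : (Fin n → Ω) → Ω → ℝ :=
    fun τ ω => ent (marg (pinned (pinned μ I τ) {j} (fun _ => ω)) i) with hG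
  have step_a : ∀ τ, ent (marg (pinned μ (insert j I) τ) i) = G τ (τ j) := by
    intro τ
    rw [hG]
    dsimp only
    rw [pinned_insert h0, pinned_congr (show ∀ i' ∈ ({j} : Finset (Fin n)),
      τ i' = (fun _ => τ j) i' by simp)]
  have step_b : ∑ τ, μ τ * G τ (τ j)
      = ∑ τ, μ τ * (∑ ω, marg (pinned μ I τ) j ω * G τ ω) := by
    have lhs_eq : ∀ τ : Fin n → Ω, μ τ * G τ (τ j)
        = ∑ ω, (if τ j = ω then μ τ * G τ ω else 0) := by
      intro τ
      rw [Finset.sum_ite_eq univ (τ j) (fun ω => μ τ * G τ ω)]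
      simp
    rw [Finset.sum_congr rfl (fun τ _ => lhs_eq τ), Finset.sum_comm]
    have rhs_eq : ∀ ω : Ω, ∑ τ, (if τ j = ω then μ τ * G τ ω else 0)
        = ∑ τ, μ τ * marg (pinned μ I τ) j ω * G τ ω := by
      intro ω
      refine (exchange h0 I (fun τ => G τ ω) ?_ j ω).symm
      intro τ τ' h
      rw [hG]
      dsimp only
      rw [pinned_congr h]
    rw [Finset.sum_congr rfl (fun ω _ => rhs_eq ω), Finset.sum_comm]
    apply Finset.sum_congr rfl; intro τ _
    rw [Finset.mul_sum]
    apply Finset.sum_congr rfl; intro ω _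
    ring
  have main : ∀ τ : Fin n → Ω, μ τ * (∑ ω, ∑ ω', klT (marg2 (pinned μ I τ) i j ω ω')
        (marg (pinned μ I τ) i ω * marg (pinned μ I τ) j ω'))
      = μ τ * ent (marg (pinned μ I τ) i)
        - μ τ * (∑ ω, marg (pinned μ I τ) j ω * G τ ω) := by
    intro τ
    rcases eq_or_ne (μ τ) 0 with hμ | hμ
    · simp [hμ]
    · have hZ : pinZ μ I τ ≠ 0 := by
        have ha := self_le_pinZ (I := I) (τ := τ) h0
        have hb : 0 < μ τ := lt_of_le_of_ne (h0 τ) (Ne.symm hμ)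
        exact ne_of_gt (lt_of_lt_of_le hb ha)
      have hid := cond_entropy_identity (pinned_nonneg h0) (sum_pinned h0 hZ) i j
      rw [← mul_sub, ← hid, hG]
  calc ∑ τ, μ τ * (∑ ω, ∑ ω', klT (marg2 (pinned μ I τ) i j ω ω')
        (marg (pinned μ I τ) i ω * marg (pinned μ I τ) j ω'))
      = ∑ τ, (μ τ * ent (marg (pinned μ I τ) i)
          - μ τ * (∑ ω, marg (pinned μ I τ) j ω * G τ ω)) :=
        Finset.sum_congr rfl (fun τ _ => main τ)
    _ = ∑ τ, μ τ * ent (marg (pinned μ I τ) i)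
          - ∑ τ, μ τ * (∑ ω, marg (pinned μ I τ) j ω * G τ ω) := Finset.sum_sub_distrib _ _
    _ = ∑ τ, μ τ * ent (marg (pinned μ I τ) i)
        - ∑ τ, μ τ * ent (marg (pinned μ (insert j I) τ) i) := by
        rw [← step_b]
        congr 1
        exact Finset.sum_congr rfl (fun τ _ => by rw [step_a τ])

end Identity


section KLG
variable {Ω : Type*} [Fintype Ω] [DecidableEq Ω] {n : ℕ}

/-- the Kullback–Leibler divergence between the two-point marginal and the
product of one-point marginals. -/
noncomputable def KLsum (ν : (Fin n → Ω) → ℝ) (i j : Fin n) : ℝ :=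
  ∑ ω, ∑ ω', klT (marg2 ν i j ω ω') (marg ν i ω * marg ν j ω')

/-- average over the reference sample of the sum of one-point pinned entropies. -/
noncomputable def Gent (μ : (Fin n → Ω) → ℝ) (J : Finset (Fin n)) : ℝ :=
  ∑ τ, μ τ * ∑ i, ent (marg (pinned μ J τ) i)

lemma sum2_marg2 {ν : (Fin n → Ω) → ℝ} (h1 : ∑ σ, ν σ = 1) (i j : Fin n) :
    ∑ z : Ω × Ω, marg2 ν i j z.1 z.2 = 1 := by
  rw [Fintype.sum_prod_type]
  calc ∑ ω, ∑ ω', marg2 ν i j ω ω' = ∑ ω, marg ν i ω :=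
        Finset.sum_congr rfl fun ω _ => sum_marg2_right i j ω
    _ = 1 := by rw [sum_marg_s2, h1]

lemma sum2_prod_marg {ν : (Fin n → Ω) → ℝ} (h1 : ∑ σ, ν σ = 1) (i j : Fin n) :
    ∑ z : Ω × Ω, marg ν i z.1 * marg ν j z.2 = 1 := by
  rw [Fintype.sum_prod_type]
  calc ∑ ω, ∑ ω', marg ν i ω * marg ν j ω'
      = ∑ ω, marg ν i ω * ∑ ω', marg ν j ω' :=
        Finset.sum_congr rfl fun ω _ => by rw [Finset.mul_sum]
    _ = (∑ ω, marg ν i ω) * ∑ ω', marg ν j ω' := by rw [Finset.sum_mul]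
    _ = 1 := by rw [sum_marg_s2, sum_marg_s2, h1, one_mul]

lemma prod_marg_abs {ν : (Fin n → Ω) → ℝ} (h0 : ∀ σ, 0 ≤ ν σ) (i j : Fin n)
    (ω ω' : Ω) (h : marg ν i ω * marg ν j ω' = 0) : marg2 ν i j ω ω' = 0 := by
  rcases mul_eq_zero.1 h with h' | h'
  · exact le_antisymm (h' ▸ marg2_le_marg_left h0 i j ω ω') (marg2_nonneg h0 i j ω ω')
  · exact le_antisymm (h' ▸ marg2_le_marg_right h0 i j ω ω') (marg2_nonneg h0 i j ω ω')

lemma KLsum_nonneg {ν : (Fin n → Ω) → ℝ} (h0 : ∀ σ, 0 ≤ ν σ) (h1 : ∑ σ, ν σ = 1)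
    (i j : Fin n) : 0 ≤ KLsum ν i j := by
  have := kl_sum_nonneg (γ := Ω × Ω) (fun z => marg2 ν i j z.1 z.2)
    (fun z => marg ν i z.1 * marg ν j z.2)
    (fun z => marg2_nonneg h0 i j z.1 z.2)
    (fun z => mul_nonneg (marg_nonneg h0 i z.1) (marg_nonneg h0 j z.2))
    (sum2_marg2 h1 i j) (sum2_prod_marg h1 i j)
    (fun z => prod_marg_abs h0 i j z.1 z.2)
  rw [Fintype.sum_prod_type] at this
  exact this

lemma dTV2_nonneg (p q : Ω → Ω → ℝ) : 0 ≤ dTV2 p q := by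
  rw [dTV2]
  apply mul_nonneg (by norm_num)
  exact Finset.sum_nonneg fun ω _ => Finset.sum_nonneg fun ω' _ => abs_nonneg _

lemma dTV2_sq_le_KLsum {ν : (Fin n → Ω) → ℝ} (h0 : ∀ σ, 0 ≤ ν σ) (h1 : ∑ σ, ν σ = 1)
    (i j : Fin n) :
    dTV2 (marg2 ν i j) (fun ω ω' => marg ν i ω * marg ν j ω') ^ 2 ≤ KLsum ν i j := by
  have hpin := pinsker (γ := Ω × Ω) (fun z => marg2 ν i j z.1 z.2)
    (fun z => marg ν i z.1 * marg ν j z.2)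
    (fun z => marg2_nonneg h0 i j z.1 z.2)
    (fun z => mul_nonneg (marg_nonneg h0 i z.1) (marg_nonneg h0 j z.2))
    (sum2_marg2 h1 i j) (sum2_prod_marg h1 i j)
    (fun z => prod_marg_abs h0 i j z.1 z.2)
  rw [Fintype.sum_prod_type, Fintype.sum_prod_type] at hpin
  rw [dTV2, KLsum]
  nlinarith [hpin]

lemma pinned_support {μ : (Fin n → Ω) → ℝ} {I : Finset (Fin n)} {τ σ : Fin n → Ω}
    (h : pinned μ I τ σ ≠ 0) : ∀ i ∈ I, σ i = τ i := by
  by_contra hc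
  rw [pinned, if_neg hc] at h
  exact h rfl

lemma KLsum_eq_zero_of_mem {μ : (Fin n → Ω) → ℝ} (h0 : ∀ σ, 0 ≤ μ σ)
    {I : Finset (Fin n)} {τ : Fin n → Ω} (hZ : pinZ μ I τ ≠ 0)
    {j : Fin n} (hj : j ∈ I) (i : Fin n) : KLsum (pinned μ I τ) i j = 0 := by
  set ν := pinned μ I τ with hν
  have hsupp : ∀ σ, ν σ ≠ 0 → σ j = τ j := fun σ h => pinned_support h j hj
  have hmargj : ∀ ω', marg ν j ω' = if ω' = τ j then 1 else 0 := by
    intro ω'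
    by_cases h : ω' = τ j
    · rw [if_pos h, marg]
      rw [← sum_pinned h0 hZ]
      apply Finset.sum_congr rfl; intro σ _
      by_cases hσ : ν σ = 0
      · rw [hσ]
        simp [show pinned μ I τ σ = 0 from hσ]
      · rw [if_pos (h ▸ hsupp σ hσ)]
    · rw [if_neg h, marg]
      apply Finset.sum_eq_zero; intro σ _
      by_cases hσj : σ j = ω'
      · rw [if_pos hσj]
        by_contra hσ
        exact h (hσj ▸ hsupp σ hσ)
      · rw [if_neg hσj]
  have hmarg2 : ∀ ω ω', marg2 ν i j ω ω' = if ω' = τ j then marg ν i ω else 0 := by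
    intro ω ω'
    by_cases h : ω' = τ j
    · rw [if_pos h, marg2, marg]
      apply Finset.sum_congr rfl; intro σ _
      by_cases hσ : ν σ = 0
      · rw [hσ]
        simp [show pinned μ I τ σ = 0 from hσ]
      · have : σ j = ω' := h ▸ hsupp σ hσ
        by_cases hσi : σ i = ω
        · rw [if_pos ⟨hσi, this⟩, if_pos hσi]
        · rw [if_neg (fun hh => hσi hh.1), if_neg hσi]
    · rw [if_neg h, marg2]
      apply Finset.sum_eq_zero; intro σ _
      by_cases hc : σ i = ω ∧ σ j = ω'
      · rw [if_pos hc]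
        by_contra hσ
        exact h (hc.2 ▸ hsupp σ hσ)
      · rw [if_neg hc]
  rw [KLsum]
  apply Finset.sum_eq_zero; intro ω _
  apply Finset.sum_eq_zero; intro ω' _
  rw [hmarg2 ω ω', hmargj ω']
  by_cases h : ω' = τ j
  · rw [if_pos h, if_pos h, mul_one]
    exact klT_self _
  · rw [if_neg h, if_neg h, mul_zero]
    simp [klT]

/-- pairwise KL over ordered pairs bounded by KL against unpinned coordinates. -/
lemma pairKL_le {μ : (Fin n → Ω) → ℝ} (h0 : ∀ σ, 0 ≤ μ σ)
    {I : Finset (Fin n)} {τ : Fin n → Ω} (hZ : pinZ μ I τ ≠ 0) :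
    ∑ i, ∑ j, (if i < j then KLsum (pinned μ I τ) i j else 0)
      ≤ ∑ i, ∑ j ∈ Iᶜ, KLsum (pinned μ I τ) i j := by
  apply Finset.sum_le_sum; intro i _
  have split := Finset.sum_add_sum_compl I (fun j => if i < j then KLsum (pinned μ I τ) i j else 0)
  rw [← split]
  have h1 : ∑ j ∈ I, (if i < j then KLsum (pinned μ I τ) i j else 0) = 0 := by
    apply Finset.sum_eq_zero; intro j hj
    rw [KLsum_eq_zero_of_mem h0 hZ hj i]
    simp
  rw [h1, zero_add]
  apply Finset.sum_le_sum; intro j _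
  split
  · exact le_rfl
  · exact KLsum_nonneg (pinned_nonneg h0) (sum_pinned h0 hZ) i j

/-- double counting: summing over supersets. -/
lemma insert_sum {α : Type*} [DecidableEq α] [Fintype α] (θ : ℕ) (g : Finset α → ℝ) :
    ∑ I ∈ (Finset.univ : Finset α).powersetCard θ, ∑ j ∈ Iᶜ, g (insert j I)
      = ((θ : ℝ) + 1) * ∑ I ∈ (Finset.univ : Finset α).powersetCard (θ + 1), g I := by
  have rhs : ∀ I' ∈ (Finset.univ : Finset α).powersetCard (θ + 1),
      ∑ _j ∈ I', g I' = ((θ : ℝ) + 1) * g I' := by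
    intro I' hI'
    rw [Finset.sum_const, (Finset.mem_powersetCard.1 hI').2, nsmul_eq_mul]
    push_cast
    ring
  rw [Finset.mul_sum, ← Finset.sum_congr rfl rhs]
  rw [Finset.sum_sigma', Finset.sum_sigma']
  apply Finset.sum_nbij' (fun x => (⟨insert x.2 x.1, x.2⟩ : Σ _ : Finset α, α))
    (fun x => (⟨x.1.erase x.2, x.2⟩ : Σ _ : Finset α, α))
  · intro x hx
    simp only [Finset.mem_sigma] at hx ⊢
    obtain ⟨hI, hj⟩ := hx
    rw [Finset.mem_powersetCard_univ] at hI ⊢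
    constructor
    · rw [Finset.card_insert_of_notMem (Finset.mem_compl.1 hj), hI]
    · exact Finset.mem_insert_self _ _
  · intro x hx
    simp only [Finset.mem_sigma] at hx ⊢
    obtain ⟨hI, hj⟩ := hx
    rw [Finset.mem_powersetCard_univ] at hI ⊢
    constructor
    · rw [Finset.card_erase_of_mem hj, hI]
      omega
    · exact Finset.mem_compl.2 (Finset.notMem_erase _ _)
  · intro x hx
    simp only [Finset.mem_sigma] at hx
    obtain ⟨hI, hj⟩ := hx
    exact Sigma.ext (by simp [Finset.erase_insert (Finset.mem_compl.1 hj)]) (by simp)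
  · intro x hx
    simp only [Finset.mem_sigma] at hx
    obtain ⟨hI, hj⟩ := hx
    exact Sigma.ext (by simp [Finset.insert_erase hj]) (by simp)
  · intro x hx
    rfl

/-- entropy decrement identity over all coordinates. -/
lemma step3a_all {μ : (Fin n → Ω) → ℝ} (h0 : ∀ σ, 0 ≤ μ σ) (I : Finset (Fin n))
    (j : Fin n) :
    ∑ τ, μ τ * (∑ i, KLsum (pinned μ I τ) i j) = Gent μ I - Gent μ (insert j I) := by
  have swap : ∀ J : Finset (Fin n), Gent μ J = ∑ i, ∑ τ, μ τ * ent (marg (pinned μ J τ) i) := by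
    intro J
    rw [Gent, Finset.sum_congr rfl (fun τ (_ : τ ∈ univ) => Finset.mul_sum _ _ _)]
    exact Finset.sum_comm
  calc ∑ τ, μ τ * (∑ i, KLsum (pinned μ I τ) i j)
      = ∑ i, ∑ τ, μ τ * KLsum (pinned μ I τ) i j := by
        rw [Finset.sum_congr rfl (fun τ (_ : τ ∈ univ) => Finset.mul_sum _ _ _)]
        exact Finset.sum_comm
    _ = ∑ i, (∑ τ, μ τ * ent (marg (pinned μ I τ) i)
          - ∑ τ, μ τ * ent (marg (pinned μ (insert j I) τ) i)) := by
        apply Finset.sum_congr rfl; intro i _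
        simp only [KLsum]
        exact step3a h0 I i j
    _ = Gent μ I - Gent μ (insert j I) := by
        rw [Finset.sum_sub_distrib, ← swap I, ← swap (insert j I)]

end KLG


section Assembly
variable {Ω : Type*} [Fintype Ω] [DecidableEq Ω] {n : ℕ}

lemma marg_zero_fn (i : Fin n) (ω : Ω) : marg (fun _ : Fin n → Ω => (0:ℝ)) i ω = 0 := by
  simp [marg]

lemma marg2_zero_fn (i j : Fin n) (ω ω' : Ω) :
    marg2 (fun _ : Fin n → Ω => (0:ℝ)) i j ω ω' = 0 := by
  simp [marg2]

lemma KLsum_pinned_nonneg {μ : (Fin n → Ω) → ℝ} (h0 : ∀ σ, 0 ≤ μ σ)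
    (I : Finset (Fin n)) (τ : Fin n → Ω) (i j : Fin n) :
    0 ≤ KLsum (pinned μ I τ) i j := by
  rcases eq_or_ne (pinZ μ I τ) 0 with hZ | hZ
  · rw [pinned_of_Z_eq_zero h0 hZ, KLsum]
    apply le_of_eq
    symm
    apply Finset.sum_eq_zero; intro ω _
    apply Finset.sum_eq_zero; intro ω' _
    rw [marg2_zero_fn, klT, zero_mul]
  · exact KLsum_nonneg (pinned_nonneg h0) (sum_pinned h0 hZ) i j

lemma Gent_nonneg {μ : (Fin n → Ω) → ℝ} (h0 : ∀ σ, 0 ≤ μ σ) (J : Finset (Fin n)) :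
    0 ≤ Gent μ J := by
  apply Finset.sum_nonneg; intro τ _
  apply mul_nonneg (h0 τ)
  apply Finset.sum_nonneg; intro i _
  exact ent_nonneg (marg_nonneg (pinned_nonneg h0) i)
    (marg_le_one (pinned_nonneg h0) (sum_pinned_le h0) i)

lemma Gent_le [Nonempty Ω] {μ : (Fin n → Ω) → ℝ} (h0 : ∀ σ, 0 ≤ μ σ)
    (h1 : ∑ σ, μ σ = 1) (J : Finset (Fin n)) :
    Gent μ J ≤ (n : ℝ) * Real.log (Fintype.card Ω) := by
  have hL : 0 ≤ Real.log (Fintype.card Ω) := by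
    apply Real.log_nonneg
    have : (1:ℕ) ≤ Fintype.card Ω := Fintype.card_pos
    exact_mod_cast this
  have per_τ : ∀ τ : Fin n → Ω, ∑ i, ent (marg (pinned μ J τ) i)
      ≤ (n : ℝ) * Real.log (Fintype.card Ω) := by
    intro τ
    calc ∑ i, ent (marg (pinned μ J τ) i) ≤ ∑ _i : Fin n, Real.log (Fintype.card Ω) := by
          apply Finset.sum_le_sum; intro i _
          rcases eq_or_ne (pinZ μ J τ) 0 with hZ | hZ
          · rw [pinned_of_Z_eq_zero h0 hZ]
            have : ent (marg (fun _ : Fin n → Ω => (0:ℝ)) i) = 0 := by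
              rw [ent]
              apply Finset.sum_eq_zero; intro ω _
              rw [marg_zero_fn]
              exact Real.negMulLog_zero
            rw [this]
            exact hL
          · exact ent_le_log_card (marg_nonneg (pinned_nonneg h0) i)
              (by rw [sum_marg_s2, sum_pinned h0 hZ])
      _ = (n : ℝ) * Real.log (Fintype.card Ω) := by
          rw [Finset.sum_const, card_univ, Fintype.card_fin, nsmul_eq_mul]
  calc Gent μ J ≤ ∑ τ, μ τ * ((n : ℝ) * Real.log (Fintype.card Ω)) := by
        apply Finset.sum_le_sum; intro τ _
        exact mul_le_mul_of_nonneg_left (per_τ τ) (h0 τ)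
    _ = (n : ℝ) * Real.log (Fintype.card Ω) := by rw [← Finset.sum_mul, h1, one_mul]

lemma pair_count : (∑ i : Fin n, ∑ j : Fin n, (if i < j then (1:ℝ) else 0)) ≤ (n:ℝ)^2/2 := by
  have hsym : (∑ i : Fin n, ∑ j : Fin n, (if i < j then (1:ℝ) else 0))
      = ∑ i : Fin n, ∑ j : Fin n, (if j < i then (1:ℝ) else 0) := Finset.sum_comm
  have hsum : (∑ i : Fin n, ∑ j : Fin n, ((if i < j then (1:ℝ) else 0)
      + (if j < i then (1:ℝ) else 0))) ≤ ∑ _i : Fin n, ∑ _j : Fin n, (1:ℝ) := by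
    apply Finset.sum_le_sum; intro i _
    apply Finset.sum_le_sum; intro j _
    rcases lt_trichotomy i j with h | h | h
    · rw [if_pos h, if_neg (asymm h)]; norm_num
    · rw [if_neg (by rw [h]; exact lt_irrefl j), if_neg (by rw [h]; exact lt_irrefl j)]; norm_num
    · rw [if_neg (asymm h), if_pos h]; norm_num
  have htot : ∑ _i : Fin n, ∑ _j : Fin n, (1:ℝ) = (n:ℝ)^2 := by
    simp [Finset.sum_const, card_univ]
    ring
  have hexp : (∑ i : Fin n, ∑ j : Fin n, ((if i < j then (1:ℝ) else 0)
      + (if j < i then (1:ℝ) else 0)))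
      = (∑ i : Fin n, ∑ j : Fin n, (if i < j then (1:ℝ) else 0))
        + ∑ i : Fin n, ∑ j : Fin n, (if j < i then (1:ℝ) else 0) := by
    rw [← Finset.sum_add_distrib]
    apply Finset.sum_congr rfl; intro i _
    rw [← Finset.sum_add_distrib]
  rw [hexp, htot, ← hsym] at hsum
  linarith

/-- innermost Cauchy–Schwarz over pairs. -/
lemma level1 {ν : (Fin n → Ω) → ℝ} (h0 : ∀ σ, 0 ≤ ν σ) (h1 : ∑ σ, ν σ = 1) :
    (∑ i, ∑ j, if i < j then
        dTV2 (marg2 ν i j) (fun ω ω' => marg ν i ω * marg ν j ω') else 0)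
      ≤ Real.sqrt ((n:ℝ)^2/2)
        * Real.sqrt (∑ i, ∑ j, if i < j then KLsum ν i j else 0) := by
  set w : Fin n × Fin n → ℝ := fun z => if z.1 < z.2 then 1 else 0 with hw
  set d : Fin n × Fin n → ℝ := fun z =>
    dTV2 (marg2 ν z.1 z.2) (fun ω ω' => marg ν z.1 ω * marg ν z.2 ω') with hd
  have lhs_eq : (∑ i, ∑ j, if i < j then
        dTV2 (marg2 ν i j) (fun ω ω' => marg ν i ω * marg ν j ω') else 0)
      = ∑ z : Fin n × Fin n, w z * d z := by
    rw [Fintype.sum_prod_type]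
    apply Finset.sum_congr rfl; intro i _
    apply Finset.sum_congr rfl; intro j _
    rw [hw, hd]
    dsimp only
    split
    · rw [one_mul]
    · rw [zero_mul]
  have hcs := CSsum Finset.univ w d
    (fun z _ => by rw [hw]; dsimp only; split <;> norm_num)
    (fun z _ => dTV2_nonneg _ _)
  rw [lhs_eq]
  refine le_trans hcs (mul_le_mul ?_ ?_ (Real.sqrt_nonneg _) (Real.sqrt_nonneg _))
  · apply Real.sqrt_le_sqrt
    have : ∑ z : Fin n × Fin n, w z
        = ∑ i : Fin n, ∑ j : Fin n, (if i < j then (1:ℝ) else 0) := by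
      rw [Fintype.sum_prod_type]
    rw [this]
    exact pair_count
  · apply Real.sqrt_le_sqrt
    rw [Fintype.sum_prod_type]
    apply Finset.sum_le_sum; intro i _
    apply Finset.sum_le_sum; intro j _
    rw [hw, hd]
    dsimp only
    split
    · rw [one_mul]
      exact dTV2_sq_le_KLsum h0 h1 i j
    · norm_num

end Assembly


section Telescope
variable {Ω : Type*} [Fintype Ω] [DecidableEq Ω] {n : ℕ}

lemma theta_step {μ : (Fin n → Ω) → ℝ} (h0 : ∀ σ, 0 ≤ μ σ) {θ : ℕ} (hθ : θ + 1 ≤ n) :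
    (1/(n.choose θ : ℝ)) * ∑ I ∈ (Finset.univ : Finset (Fin n)).powersetCard θ, ∑ τ, μ τ *
        (∑ i, ∑ j, if i < j then KLsum (pinned μ I τ) i j else 0)
      ≤ (n : ℝ) * ((1/(n.choose θ : ℝ)) * (∑ I ∈ (Finset.univ : Finset (Fin n)).powersetCard θ, Gent μ I)
          - (1/(n.choose (θ+1) : ℝ)) * ∑ I ∈ (Finset.univ : Finset (Fin n)).powersetCard (θ+1), Gent μ I) := by
  have hθn : θ ≤ n := le_trans (Nat.le_succ θ) hθ
  have hC : (0:ℝ) < n.choose θ := by exact_mod_cast Nat.choose_pos hθn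
  have hC' : (0:ℝ) < n.choose (θ+1) := by exact_mod_cast Nat.choose_pos hθ
  have hnθ : (0:ℝ) < (n:ℝ) - θ := by
    have h : θ < n := hθ
    have := (Nat.cast_lt (α := ℝ)).2 h
    linarith
  set A := ∑ I ∈ (Finset.univ : Finset (Fin n)).powersetCard θ, Gent μ I with hA
  set A' := ∑ I ∈ (Finset.univ : Finset (Fin n)).powersetCard (θ+1), Gent μ I with hA'
  set S₂ := ∑ I ∈ (Finset.univ : Finset (Fin n)).powersetCard θ, ∑ τ, μ τ *
    (∑ i, ∑ j ∈ Iᶜ, KLsum (pinned μ I τ) i j) with hS₂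
  have step1 : ∑ I ∈ (Finset.univ : Finset (Fin n)).powersetCard θ, ∑ τ, μ τ *
      (∑ i, ∑ j, if i < j then KLsum (pinned μ I τ) i j else 0) ≤ S₂ := by
    apply Finset.sum_le_sum; intro I _
    apply Finset.sum_le_sum; intro τ _
    rcases eq_or_ne (μ τ) 0 with hμ | hμ
    · rw [hμ, zero_mul, zero_mul]
    · have hZ : pinZ μ I τ ≠ 0 :=
        ne_of_gt (lt_of_lt_of_le (lt_of_le_of_ne (h0 τ) (Ne.symm hμ)) (self_le_pinZ h0))
      exact mul_le_mul_of_nonneg_left (pairKL_le h0 hZ) (h0 τ)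
  have hS2nonneg : 0 ≤ S₂ := by
    apply Finset.sum_nonneg; intro I _
    apply Finset.sum_nonneg; intro τ _
    apply mul_nonneg (h0 τ)
    apply Finset.sum_nonneg; intro i _
    exact Finset.sum_nonneg fun j _ => KLsum_pinned_nonneg h0 I τ i j
  have step2 : S₂ = ∑ I ∈ (Finset.univ : Finset (Fin n)).powersetCard θ, ∑ j ∈ Iᶜ,
      ∑ τ, μ τ * (∑ i, KLsum (pinned μ I τ) i j) := by
    rw [hS₂]
    apply Finset.sum_congr rfl; intro I _
    have per_τ : ∀ τ : Fin n → Ω, μ τ * (∑ i, ∑ j ∈ Iᶜ, KLsum (pinned μ I τ) i j)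
        = ∑ j ∈ Iᶜ, μ τ * (∑ i, KLsum (pinned μ I τ) i j) := by
      intro τ
      rw [Finset.sum_comm, Finset.mul_sum]
    rw [Finset.sum_congr rfl (fun τ _ => per_τ τ)]
    exact Finset.sum_comm
  have step3 : S₂ = ((n:ℝ) - θ) * A - ((θ:ℝ) + 1) * A' := by
    rw [step2]
    have per_I : ∀ I ∈ (Finset.univ : Finset (Fin n)).powersetCard θ,
        ∑ j ∈ Iᶜ, ∑ τ, μ τ * (∑ i, KLsum (pinned μ I τ) i j)
          = ((n:ℝ) - θ) * Gent μ I - ∑ j ∈ Iᶜ, Gent μ (insert j I) := by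
      intro I hI
      rw [Finset.sum_congr rfl (fun j _ => step3a_all h0 I j), Finset.sum_sub_distrib,
        Finset.sum_const, nsmul_eq_mul, Finset.card_compl,
        (Finset.mem_powersetCard.1 hI).2, Fintype.card_fin, Nat.cast_sub hθn]
    rw [Finset.sum_congr rfl per_I, Finset.sum_sub_distrib, ← Finset.mul_sum,
      insert_sum θ (Gent μ), ← hA, ← hA']
  have hrel : (n.choose (θ+1) : ℝ) * ((θ:ℝ)+1) = (n.choose θ : ℝ) * ((n:ℝ) - θ) := by
    have hnat := Nat.choose_succ_right_eq n θ
    have hcast : ((n.choose (θ+1) * (θ+1) : ℕ) : ℝ) = ((n.choose θ * (n - θ) : ℕ) : ℝ) := by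
      exact_mod_cast congrArg (fun m : ℕ => (m : ℝ)) hnat
    push_cast [Nat.cast_sub hθn] at hcast
    linarith [hcast]
  have h1div : (1:ℝ)/(n.choose (θ+1) : ℝ) * ((n:ℝ)-θ) = (1/(n.choose θ : ℝ)) * ((θ:ℝ)+1) := by
    rw [div_mul_eq_mul_div, div_mul_eq_mul_div, one_mul, one_mul,
      div_eq_div_iff hC'.ne' hC.ne']
    linear_combination -hrel
  have key : (1/(n.choose θ:ℝ)) * S₂
      = ((n:ℝ) - θ) * ((1/(n.choose θ:ℝ)) * A - (1/(n.choose (θ+1):ℝ)) * A') := by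
    rw [step3]
    linear_combination A' * h1div
  have hΔ : 0 ≤ (1/(n.choose θ:ℝ)) * A - (1/(n.choose (θ+1):ℝ)) * A' := by
    have hprod : 0 ≤ ((n:ℝ) - θ) * ((1/(n.choose θ:ℝ)) * A - (1/(n.choose (θ+1):ℝ)) * A') := by
      rw [← key]
      exact mul_nonneg (by positivity) hS2nonneg
    nlinarith [hprod, hnθ]
  calc (1/(n.choose θ : ℝ)) * ∑ I ∈ (Finset.univ : Finset (Fin n)).powersetCard θ, ∑ τ, μ τ *
        (∑ i, ∑ j, if i < j then KLsum (pinned μ I τ) i j else 0)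
      ≤ (1/(n.choose θ : ℝ)) * S₂ := mul_le_mul_of_nonneg_left step1 (by positivity)
    _ = ((n:ℝ) - θ) * ((1/(n.choose θ:ℝ)) * A - (1/(n.choose (θ+1):ℝ)) * A') := key
    _ ≤ (n:ℝ) * ((1/(n.choose θ:ℝ)) * A - (1/(n.choose (θ+1):ℝ)) * A') := by
        apply mul_le_mul_of_nonneg_right _ hΔ
        have : (0:ℝ) ≤ θ := Nat.cast_nonneg θ
        linarith

lemma telescope [Nonempty Ω] {μ : (Fin n → Ω) → ℝ} (h0 : ∀ σ, 0 ≤ μ σ)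
    (h1 : ∑ σ, μ σ = 1) (T : ℕ) (hT : T + 2 ≤ n) :
    ∑ θ ∈ Finset.range (T+1), (1/(n.choose θ : ℝ)) *
        ∑ I ∈ (Finset.univ : Finset (Fin n)).powersetCard θ, ∑ τ, μ τ *
          (∑ i, ∑ j, if i < j then KLsum (pinned μ I τ) i j else 0)
      ≤ (n:ℝ)^2 * Real.log (Fintype.card Ω) := by
  set b : ℕ → ℝ := fun θ =>
    (1/(n.choose θ : ℝ)) * ∑ I ∈ (Finset.univ : Finset (Fin n)).powersetCard θ, Gent μ I with hb
  have hstep : ∀ θ ∈ Finset.range (T+1), (1/(n.choose θ : ℝ)) *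
      ∑ I ∈ (Finset.univ : Finset (Fin n)).powersetCard θ, ∑ τ, μ τ *
        (∑ i, ∑ j, if i < j then KLsum (pinned μ I τ) i j else 0)
      ≤ (n:ℝ) * (b θ - b (θ+1)) := by
    intro θ hmem
    have hθ : θ + 1 ≤ n := by
      have := Finset.mem_range.1 hmem
      omega
    exact theta_step h0 hθ
  calc ∑ θ ∈ Finset.range (T+1), (1/(n.choose θ : ℝ)) *
        ∑ I ∈ (Finset.univ : Finset (Fin n)).powersetCard θ, ∑ τ, μ τ *
          (∑ i, ∑ j, if i < j then KLsum (pinned μ I τ) i j else 0)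
      ≤ ∑ θ ∈ Finset.range (T+1), (n:ℝ) * (b θ - b (θ+1)) := Finset.sum_le_sum hstep
    _ = (n:ℝ) * (b 0 - b (T+1)) := by rw [← Finset.mul_sum, Finset.sum_range_sub' b]
    _ ≤ (n:ℝ) * ((n:ℝ) * Real.log (Fintype.card Ω)) := by
        apply mul_le_mul_of_nonneg_left _ (Nat.cast_nonneg n)
        have hb0 : b 0 ≤ (n:ℝ) * Real.log (Fintype.card Ω) := by
          rw [hb]
          dsimp only
          rw [Nat.choose_zero_right, Nat.cast_one, Finset.powersetCard_zero,
            Finset.sum_singleton]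
          norm_num
          exact Gent_le h0 h1 ∅
        have hbT : 0 ≤ b (T+1) := by
          rw [hb]
          dsimp only
          exact mul_nonneg (by positivity)
            (Finset.sum_nonneg fun I _ => Gent_nonneg h0 I)
        linarith
    _ = (n:ℝ)^2 * Real.log (Fintype.card Ω) := by ring

end Telescope


section Final
variable {Ω : Type*} [Fintype Ω] [DecidableEq Ω] {n : ℕ}

lemma final_bound [Nonempty Ω] (ε : ℝ) (hε : 0 < ε)
    {μ : (Fin n → Ω) → ℝ} (h0 : ∀ σ, 0 ≤ μ σ) (h1 : ∑ σ, μ σ = 1) (T : ℕ)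
    (hT2 : T + 2 ≤ n) (hLT : Real.log (Fintype.card Ω) ≤ ((T:ℝ)+1) * ε^2) :
    (1 / (T + 1 : ℝ)) * ∑ θ ∈ Finset.range (T + 1),
      (1 / (n.choose θ : ℝ)) * ∑ I ∈ Finset.univ.powersetCard θ, ∑ τ, μ τ *
        (∑ i : Fin n, ∑ j : Fin n, if i < j then
            dTV2 (marg2 (pinned μ I τ) i j)
              (fun ω ω' => marg (pinned μ I τ) i ω * marg (pinned μ I τ) j ω')
          else 0)
    ≤ ε * n ^ 2 := by
  have hT1 : (0:ℝ) < (T:ℝ) + 1 := by positivity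
  have hKp : ∀ (I : Finset (Fin n)) (τ : Fin n → Ω),
      0 ≤ ∑ i, ∑ j, if i < j then KLsum (pinned μ I τ) i j else 0 := by
    intro I τ
    apply Finset.sum_nonneg; intro i _
    apply Finset.sum_nonneg; intro j _
    split
    · exact KLsum_pinned_nonneg h0 I τ i j
    · exact le_rfl
  set R : ℕ → ℝ := fun θ => (1/(n.choose θ : ℝ)) *
    ∑ I ∈ (Finset.univ : Finset (Fin n)).powersetCard θ, ∑ τ, μ τ *
      (∑ i, ∑ j, if i < j then KLsum (pinned μ I τ) i j else 0) with hR
  have hRnonneg : ∀ θ, 0 ≤ R θ := by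
    intro θ
    apply mul_nonneg (by positivity)
    apply Finset.sum_nonneg; intro I _
    apply Finset.sum_nonneg; intro τ _
    exact mul_nonneg (h0 τ) (hKp I τ)
  have hθbound : ∀ θ ∈ Finset.range (T+1),
      (1 / (n.choose θ : ℝ)) * ∑ I ∈ Finset.univ.powersetCard θ, ∑ τ, μ τ *
        (∑ i : Fin n, ∑ j : Fin n, if i < j then
            dTV2 (marg2 (pinned μ I τ) i j)
              (fun ω ω' => marg (pinned μ I τ) i ω * marg (pinned μ I τ) j ω')
          else 0)
      ≤ Real.sqrt ((n:ℝ)^2/2) * Real.sqrt (R θ) := by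
    intro θ hmem
    have hθn : θ ≤ n := by
      have := Finset.mem_range.1 hmem
      omega
    have hC : (0:ℝ) < n.choose θ := by exact_mod_cast Nat.choose_pos hθn
    have per : ∀ (I : Finset (Fin n)) (τ : Fin n → Ω), μ τ *
        (∑ i : Fin n, ∑ j : Fin n, if i < j then
            dTV2 (marg2 (pinned μ I τ) i j)
              (fun ω ω' => marg (pinned μ I τ) i ω * marg (pinned μ I τ) j ω')
          else 0)
        ≤ μ τ * (Real.sqrt ((n:ℝ)^2/2)
            * Real.sqrt (∑ i, ∑ j, if i < j then KLsum (pinned μ I τ) i j else 0)) := by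
      intro I τ
      rcases eq_or_ne (μ τ) 0 with hμ | hμ
      · rw [hμ, zero_mul, zero_mul]
      · have hZ : pinZ μ I τ ≠ 0 :=
          ne_of_gt (lt_of_lt_of_le (lt_of_le_of_ne (h0 τ) (Ne.symm hμ)) (self_le_pinZ h0))
        exact mul_le_mul_of_nonneg_left
          (level1 (pinned_nonneg h0) (sum_pinned h0 hZ)) (h0 τ)
    have hcs := CSsum ((Finset.univ : Finset (Fin n)).powersetCard θ ×ˢ
        (Finset.univ : Finset (Fin n → Ω)))
      (fun p => (1/(n.choose θ : ℝ)) * μ p.2)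
      (fun p => Real.sqrt (∑ i, ∑ j, if i < j then KLsum (pinned μ p.1 p.2) i j else 0))
      (fun p _ => mul_nonneg (by positivity) (h0 p.2))
      (fun p _ => Real.sqrt_nonneg _)
    have hw1 : ∑ p ∈ (Finset.univ : Finset (Fin n)).powersetCard θ ×ˢ
        (Finset.univ : Finset (Fin n → Ω)), (1/(n.choose θ : ℝ)) * μ p.2 = 1 := by
      rw [Finset.sum_product]
      have per_I : ∀ I ∈ (Finset.univ : Finset (Fin n)).powersetCard θ,
          ∑ τ, (1/(n.choose θ : ℝ)) * μ τ = 1/(n.choose θ : ℝ) := by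
        intro I _
        rw [← Finset.mul_sum, h1, mul_one]
      rw [Finset.sum_congr rfl per_I, Finset.sum_const, nsmul_eq_mul,
        Finset.card_powersetCard, Finset.card_univ, Fintype.card_fin, mul_one_div,
        div_self (ne_of_gt hC)]
    have hwK : ∑ p ∈ (Finset.univ : Finset (Fin n)).powersetCard θ ×ˢ
        (Finset.univ : Finset (Fin n → Ω)), ((1/(n.choose θ : ℝ)) * μ p.2) *
          (Real.sqrt (∑ i, ∑ j, if i < j then KLsum (pinned μ p.1 p.2) i j else 0))^2
        = R θ := by
      rw [hR, Finset.sum_product]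
      dsimp only
      rw [Finset.mul_sum]
      apply Finset.sum_congr rfl; intro I _
      rw [Finset.mul_sum]
      apply Finset.sum_congr rfl; intro τ _
      rw [Real.sq_sqrt (hKp I τ)]
      ring
    rw [hw1, hwK, Real.sqrt_one, one_mul] at hcs
    calc (1 / (n.choose θ : ℝ)) * ∑ I ∈ Finset.univ.powersetCard θ, ∑ τ, μ τ *
        (∑ i : Fin n, ∑ j : Fin n, if i < j then
            dTV2 (marg2 (pinned μ I τ) i j)
              (fun ω ω' => marg (pinned μ I τ) i ω * marg (pinned μ I τ) j ω')
          else 0)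
        ≤ (1 / (n.choose θ : ℝ)) * ∑ I ∈ Finset.univ.powersetCard θ, ∑ τ, μ τ *
          (Real.sqrt ((n:ℝ)^2/2)
            * Real.sqrt (∑ i, ∑ j, if i < j then KLsum (pinned μ I τ) i j else 0)) := by
          apply mul_le_mul_of_nonneg_left _ (by positivity)
          exact Finset.sum_le_sum fun I _ => Finset.sum_le_sum fun τ _ => per I τ
      _ = Real.sqrt ((n:ℝ)^2/2) * ∑ p ∈ (Finset.univ : Finset (Fin n)).powersetCard θ ×ˢ
            (Finset.univ : Finset (Fin n → Ω)), ((1/(n.choose θ : ℝ)) * μ p.2) *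
              Real.sqrt (∑ i, ∑ j, if i < j then KLsum (pinned μ p.1 p.2) i j else 0) := by
          rw [Finset.sum_product, Finset.mul_sum, Finset.mul_sum]
          apply Finset.sum_congr rfl; intro I _
          rw [Finset.mul_sum, Finset.mul_sum]
          apply Finset.sum_congr rfl; intro τ _
          ring
      _ ≤ Real.sqrt ((n:ℝ)^2/2) * Real.sqrt (R θ) :=
          mul_le_mul_of_nonneg_left hcs (Real.sqrt_nonneg _)
  have houter := CSsum (Finset.range (T+1)) (fun _ => 1/((T:ℝ)+1))
    (fun θ => Real.sqrt (R θ)) (fun θ _ => by positivity) (fun θ _ => Real.sqrt_nonneg _)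
  have hsum1 : ∑ _θ ∈ Finset.range (T+1), 1/((T:ℝ)+1) = 1 := by
    rw [Finset.sum_const, Finset.card_range, nsmul_eq_mul]
    push_cast
    rw [mul_one_div, div_self (ne_of_gt hT1)]
  have hsumR : ∑ θ ∈ Finset.range (T+1), (1/((T:ℝ)+1)) * (Real.sqrt (R θ))^2
      = (1/((T:ℝ)+1)) * ∑ θ ∈ Finset.range (T+1), R θ := by
    rw [Finset.mul_sum]
    apply Finset.sum_congr rfl; intro θ _
    rw [Real.sq_sqrt (hRnonneg θ)]
  rw [hsum1, hsumR, Real.sqrt_one, one_mul] at houter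
  have htel : ∑ θ ∈ Finset.range (T+1), R θ
      ≤ (n:ℝ)^2 * Real.log (Fintype.card Ω) := telescope h0 h1 T hT2
  have hK2 : (1/((T:ℝ)+1)) * ∑ θ ∈ Finset.range (T+1), R θ ≤ (n:ℝ)^2 * ε^2 := by
    have step := mul_le_mul_of_nonneg_left htel (le_of_lt (one_div_pos.2 hT1))
    apply le_trans step
    rw [div_mul_eq_mul_div, one_mul, div_le_iff₀ hT1]
    nlinarith [hLT, sq_nonneg (n:ℝ)]
  calc (1 / (T + 1 : ℝ)) * ∑ θ ∈ Finset.range (T + 1),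
      (1 / (n.choose θ : ℝ)) * ∑ I ∈ Finset.univ.powersetCard θ, ∑ τ, μ τ *
        (∑ i : Fin n, ∑ j : Fin n, if i < j then
            dTV2 (marg2 (pinned μ I τ) i j)
              (fun ω ω' => marg (pinned μ I τ) i ω * marg (pinned μ I τ) j ω')
          else 0)
      ≤ (1 / (T + 1 : ℝ)) * ∑ θ ∈ Finset.range (T + 1),
          Real.sqrt ((n:ℝ)^2/2) * Real.sqrt (R θ) := by
        apply mul_le_mul_of_nonneg_left _ (by positivity)
        exact Finset.sum_le_sum hθbound
    _ = Real.sqrt ((n:ℝ)^2/2) * ∑ θ ∈ Finset.range (T+1), (1/((T:ℝ)+1)) * Real.sqrt (R θ) := by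
        rw [Finset.mul_sum, Finset.mul_sum]
        apply Finset.sum_congr rfl; intro θ _
        ring
    _ ≤ Real.sqrt ((n:ℝ)^2/2) * Real.sqrt ((1/((T:ℝ)+1)) * ∑ θ ∈ Finset.range (T+1), R θ) :=
        mul_le_mul_of_nonneg_left houter (Real.sqrt_nonneg _)
    _ ≤ Real.sqrt ((n:ℝ)^2/2) * Real.sqrt ((n:ℝ)^2 * ε^2) :=
        mul_le_mul_of_nonneg_left (Real.sqrt_le_sqrt hK2) (Real.sqrt_nonneg _)
    _ ≤ ε * n ^ 2 := by
        have e1 : Real.sqrt ((n:ℝ)^2 * ε^2) = (n:ℝ) * ε := by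
          rw [show (n:ℝ)^2 * ε^2 = ((n:ℝ)*ε)^2 by ring]
          exact Real.sqrt_sq (by positivity)
        have e2 : Real.sqrt ((n:ℝ)^2/2) ≤ (n:ℝ) := by
          have h : ((n:ℝ)^2/2) ≤ (n:ℝ)^2 := by nlinarith [sq_nonneg (n:ℝ)]
          calc Real.sqrt ((n:ℝ)^2/2) ≤ Real.sqrt ((n:ℝ)^2) := Real.sqrt_le_sqrt h
            _ = (n:ℝ) := Real.sqrt_sq (Nat.cast_nonneg n)
        rw [e1]
        calc Real.sqrt ((n:ℝ)^2/2) * ((n:ℝ) * ε)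
            ≤ (n:ℝ) * ((n:ℝ) * ε) := mul_le_mul_of_nonneg_right e2 (by positivity)
          _ = ε * n^2 := by ring

end Final

/-- Theorem (discrete pinning): for every `ε > 0` and all large enough `n`, for every
distribution `μ` on `Ω^n`, pinning a uniformly random number `Θ ≤ ⌈log|Ω|/ε²⌉` of
uniformly random coordinates to a reference sample `τ ~ μ` makes the pinned measure
`μ̂` nearly pairwise independent:
`∑_{1 ≤ i < j ≤ n} E[ d_TV(μ̂_{i,j}, μ̂_i ⊗ μ̂_j) ] ≤ ε n²`. -/
theorem pinning_pairwise_independence {Ω : Type*} [Fintype Ω] [DecidableEq Ω]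
    (ε : ℝ) (hε : 0 < ε) :
    ∃ n₀ : ℕ, ∀ n : ℕ, n₀ ≤ n → ∀ μ : (Fin n → Ω) → ℝ, IsProb μ →
      (let T : ℕ := ⌈Real.log (Fintype.card Ω) / ε ^ 2⌉₊
       (1 / (T + 1 : ℝ)) * ∑ θ ∈ Finset.range (T + 1),
         (1 / (n.choose θ : ℝ)) * ∑ I ∈ Finset.univ.powersetCard θ, ∑ τ, μ τ *
           (∑ i : Fin n, ∑ j : Fin n, if i < j then
              dTV2 (marg2 (pinned μ I τ) i j)
                (fun ω ω' => marg (pinned μ I τ) i ω * marg (pinned μ I τ) j ω')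
            else 0))
      ≤ ε * n ^ 2 := by
  refine ⟨⌈Real.log (Fintype.card Ω) / ε ^ 2⌉₊ + 2, fun n hn μ hμ => ?_⟩
  obtain ⟨h0, h1⟩ := hμ
  rcases isEmpty_or_nonempty Ω with hE | hNE
  · exfalso
    have hpos : 0 < n := by omega
    haveI : IsEmpty (Fin n → Ω) := ⟨fun f => hE.elim (f ⟨0, hpos⟩)⟩
    rw [Finset.univ_eq_empty, Finset.sum_empty] at h1
    norm_num at h1
  · have hT2 : ⌈Real.log (Fintype.card Ω) / ε ^ 2⌉₊ + 2 ≤ n := hn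
    have hLT : Real.log (Fintype.card Ω)
        ≤ ((⌈Real.log (Fintype.card Ω) / ε ^ 2⌉₊ : ℝ) + 1) * ε^2 := by
      have hceil : Real.log (Fintype.card Ω) / ε^2
          ≤ (⌈Real.log (Fintype.card Ω) / ε ^ 2⌉₊ : ℝ) := Nat.le_ceil _
      have hε2 : (0:ℝ) < ε^2 := by positivity
      rw [div_le_iff₀ hε2] at hceil
      nlinarith [hceil, hε2]
    exact final_bound ε hε h0 h1 _ hT2 hLT
end
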